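/- arXiv:1806.00647 — 10 statements merged into one kernel-verified Lean document; each statement's English description precedes it below -/
import Mathlib

section
/- If φ*(N) divides N and m is a squarefree integer dividing N, then the Euler totient φ(m) divides N. -/
/-!
For squarefree `m`, `φ m = ∏_{p ∣ m} (p - 1)`. Each factor `p - 1` divides the factor
`p ^ e - 1` of `φ* N` at the same prime, and the primes of `m` are among those of `N`,
so `φ m ∣ φ* N ∣ N`.
-/

/-- The unitary totient function: φ*(n) = ∏_{p^e || n} (p^e - 1). -/
def uphi (n : ℕ) : ℕ := ∏ p ∈ n.primeFactors, (p ^ n.factorization p - 1)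

theorem Nat.totient_eq_prod_primeFactors_sub_one_of_squarefree {m : ℕ} (hm : Squarefree m) :
    m.totient = ∏ p ∈ m.primeFactors, (p - 1) := by
  rw [Nat.totient_eq_div_primeFactors_mul, Nat.prod_primeFactors_of_squarefree hm,
    Nat.div_self (Nat.pos_of_ne_zero hm.ne_zero), one_mul]

theorem prod_primeFactors_sub_one_dvd_uphi (N : ℕ) :
    ∏ p ∈ N.primeFactors, (p - 1) ∣ uphi N :=
  Finset.prod_dvd_prod_of_dvd _ _ fun p _ => Nat.sub_one_dvd_pow_sub_one p _

theorem totient_dvd_uphi_of_squarefree_of_dvd {m N : ℕ} (hm : Squarefree m) (hmN : m ∣ N)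
    (hN : N ≠ 0) : m.totient ∣ uphi N := by
  rw [Nat.totient_eq_prod_primeFactors_sub_one_of_squarefree hm]
  exact (Finset.prod_dvd_prod_of_subset _ _ _ (Nat.primeFactors_mono hmN hN)).trans
    (prod_primeFactors_sub_one_dvd_uphi N)

theorem stmt2 (N m : ℕ) (hdvd : uphi N ∣ N) (hm : Squarefree m) (hmN : m ∣ N) :
    Nat.totient m ∣ N := by
  rcases eq_or_ne N 0 with rfl | hN
  · exact dvd_zero _
  · exact (totient_dvd_uphi_of_squarefree_of_dvd hm hmN hN).trans hdvd
end

section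
/- Suppose φ*(N) divides N, 2^e exactly divides N, 2^f divides N/φ*(N), and the odd prime divisors of N are p_1, …, p_r with 2^{f_i} dividing p_i − 1 for each i. Then f + f_1 + ⋯ + f_r ≤ e. In particular, N has at most e distinct odd prime factors. -/
/-! Each factor `p ^ k - 1` of `φ*(N)` is divisible by `p - 1`, so the powers of two in the
`p_i - 1` accumulate in `φ*(N)`; together with `2 ^ f ∣ N / φ*(N)` they divide `N`, whose
`2`-adic valuation is `e`. -/

lemma pow_sum_dvd_uphi {N a : ℕ} {s : Finset ℕ} (g : ℕ → ℕ) (hs : s ⊆ N.primeFactors)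
    (hg : ∀ p ∈ s, a ^ g p ∣ p - 1) : a ^ ∑ p ∈ s, g p ∣ uphi N := by
  rw [← Finset.prod_pow_eq_pow_sum]
  refine (Finset.prod_dvd_prod_of_dvd _ _ fun p hp => ?_).trans
    (Finset.prod_dvd_prod_of_subset _ _ _ hs)
  exact (hg p hp).trans (Nat.sub_one_dvd_pow_sub_one p _)

theorem stmt3_general (N e f : ℕ) (fi : ℕ → ℕ) (hdvd : uphi N ∣ N)
    (h2e' : ¬ 2 ^ (e + 1) ∣ N)
    (hf : 2 ^ f ∣ N / uphi N)
    (hfi : ∀ p ∈ N.primeFactors.erase 2, 2 ^ fi p ∣ p - 1) :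
    f + ∑ p ∈ N.primeFactors.erase 2, fi p ≤ e := by
  have hodd : 2 ^ ∑ p ∈ N.primeFactors.erase 2, fi p ∣ uphi N :=
    pow_sum_dvd_uphi fi (Finset.erase_subset 2 _) hfi
  have hN : 2 ^ (f + ∑ p ∈ N.primeFactors.erase 2, fi p) ∣ N := by
    rw [pow_add, mul_comm]
    exact (mul_dvd_mul_right hodd _).trans (Nat.mul_dvd_of_dvd_div hdvd hf)
  by_contra! h
  exact h2e' ((pow_dvd_pow 2 h).trans hN)

theorem stmt3 (N e f : ℕ) (fi : ℕ → ℕ) (hN : 0 < N) (hdvd : uphi N ∣ N)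
    (h2e : 2 ^ e ∣ N) (h2e' : ¬ 2 ^ (e + 1) ∣ N)
    (hf : 2 ^ f ∣ N / uphi N)
    (hfi : ∀ p ∈ N.primeFactors.erase 2, 2 ^ fi p ∣ p - 1) :
    f + ∑ p ∈ N.primeFactors.erase 2, fi p ≤ e :=
  stmt3_general N e f fi hdvd h2e' hf hfi
end

section
/- If φ*(N) divides N and p is the smallest odd prime factor of N, then p is a Fermat prime, i.e., p = 2^{2^k} + 1 for some k ≥ 0. -/
theorem sub_one_dvd_uphi {n p : ℕ} (hp : p ∈ n.primeFactors) : p - 1 ∣ uphi n := by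
  have hpow : p - 1 ∣ p ^ n.factorization p - 1 := by
    simpa using Nat.sub_dvd_pow_sub_pow p 1 (n.factorization p)
  exact hpow.trans (Finset.dvd_prod_of_mem _ hp)

theorem sub_one_dvd_of_uphi_dvd {n p : ℕ} (h : uphi n ∣ n) (hp : p.Prime) (hpn : p ∣ n) :
    p - 1 ∣ n := by
  rcases eq_or_ne n 0 with rfl | hn
  · exact dvd_zero _
  · exact (sub_one_dvd_uphi (Nat.mem_primeFactors.2 ⟨hp, hpn, hn⟩)).trans h

theorem exists_eq_two_pow_of_dvd_of_forall_odd_prime_le {n p : ℕ} (hp : 2 ≤ p)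
    (hdvd : p - 1 ∣ n) (hmin : ∀ q : ℕ, q.Prime → q ≠ 2 → q ∣ n → p ≤ q) :
    ∃ m, p - 1 = 2 ^ m := by
  have hpos : p - 1 ≠ 0 := by omega
  have htwo : ∀ {d : ℕ}, d.Prime → d ∣ p - 1 → d = 2 := by
    intro d hd hdp
    by_contra hd2
    have hpd := hmin d hd hd2 (hdp.trans hdvd)
    have hdle := Nat.le_of_dvd (Nat.pos_of_ne_zero hpos) hdp
    omega
  exact ⟨_, Nat.eq_prime_pow_of_unique_prime_dvd hpos htwo⟩

theorem exists_eq_fermat_of_sub_one_eq_two_pow {p m : ℕ} (hp : p.Prime) (hp2 : p ≠ 2)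
    (hm : p - 1 = 2 ^ m) : ∃ k : ℕ, p = 2 ^ (2 ^ k) + 1 := by
  have hpm : p = 2 ^ m + 1 := by have := hp.two_le; omega
  have hm0 : m ≠ 0 := by rintro rfl; omega
  obtain ⟨k, rfl⟩ := Nat.pow_of_pow_add_prime one_lt_two hm0 (hpm ▸ hp)
  exact ⟨k, hpm⟩

theorem stmt5 (N p : ℕ) (hdvd : uphi N ∣ N)
    (hp : p.Prime) (hp2 : p ≠ 2) (hpN : p ∣ N)
    (hmin : ∀ q : ℕ, q.Prime → q ≠ 2 → q ∣ N → p ≤ q) :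
    ∃ k : ℕ, p = 2 ^ (2 ^ k) + 1 := by
  obtain ⟨m, hm⟩ := exists_eq_two_pow_of_dvd_of_forall_odd_prime_le hp.two_le
    (sub_one_dvd_of_uphi_dvd hdvd hp hpN) hmin
  exact exists_eq_fermat_of_sub_one_eq_two_pow hp hp2 hm
end

section
/- If φ*(N) divides N, a is a prime, k ≥ 1, and a^k exactly divides N, then k divides N. -/
open Finset

/-!
Fix a prime power `p ^ i ∣ k`. It suffices to find a prime `q ∣ a ^ k - 1` with `p ^ i ∣ q - 1`:
then `q ∣ N`, and `q - 1 ∣ q ^ e - 1 ∣ φ*(N) ∣ N`. Such a `q` is a prime modulo which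
`b = a ^ (k / p ^ i)` has order exactly `p ^ i` (Zsigmondy's theorem for prime-power exponents).
Any prime `q ≠ p` dividing `Φ_{p^i}(b) = ∑_{l < p} c ^ l`, `c = b ^ p ^ (i - 1)`, works, and one
exists because this number exceeds `p` but is not divisible by `p ^ 2`: for odd `p` by lifting the
exponent, for `p = 2` (and `i ≥ 2`) because `c` is a square. In the exceptional case `p ^ i = 2`,
either `a = 2 ∣ N` or `2 ∣ a - 1 ∣ φ*(N)`.
-/

theorem not_sq_dvd_geom_sum_of_odd {p : ℕ} (hp : p.Prime) (hodd : Odd p) (c : ℕ) :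
    ¬ p ^ 2 ∣ ∑ i ∈ range p, c ^ i := by
  have : Fact p.Prime := ⟨hp⟩
  intro hsq
  have hc : (c : ZMod p) = 1 := by
    have hS : ∑ i ∈ range p, (c : ZMod p) ^ i = 0 := by
      exact_mod_cast (ZMod.natCast_eq_zero_iff _ p).2 ((dvd_pow_self p two_ne_zero).trans hsq)
    have := geom_sum_mul (c : ZMod p) p
    rwa [hS, zero_mul, ZMod.pow_card, eq_comm, sub_eq_zero] at this
  have hxy : (p : ℤ) ∣ c - 1 := by
    rw [← ZMod.intCast_zmod_eq_zero_iff_dvd]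
    push_cast
    rw [hc, sub_self]
  have hx : ¬ (p : ℤ) ∣ c := by
    rw [← ZMod.intCast_zmod_eq_zero_iff_dvd]
    push_cast
    rw [hc]
    exact one_ne_zero
  have hmult := emultiplicity_geom_sum₂_eq_one (Nat.prime_iff_prime_int.mp hp) hodd hxy hx
  simp only [one_pow, mul_one] at hmult
  have hsqZ : (p : ℤ) ^ 2 ∣ ∑ i ∈ range p, (c : ℤ) ^ i := by exact_mod_cast hsq
  have := le_emultiplicity_of_pow_dvd hsqZ
  rw [hmult] at this
  norm_num at this

theorem not_four_dvd_sq_add_one (c : ℕ) : ¬ 4 ∣ c ^ 2 + 1 := by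
  intro h
  have hc := (ZMod.natCast_eq_zero_iff _ 4).2 h
  push_cast at hc
  generalize (c : ZMod 4) = x at hc
  revert x
  decide

theorem exists_prime_ne_dvd_of_not_sq_dvd {p n : ℕ} (hp : p.Prime) (hpn : p < n)
    (hsq : ¬ p ^ 2 ∣ n) : ∃ q, q.Prime ∧ q ≠ p ∧ q ∣ n := by
  by_contra! h
  have hn : n = p ^ n.primeFactorsList.length :=
    Nat.eq_prime_pow_of_unique_prime_dvd (by omega) fun hq hqn =>
      by_contra fun hne => h _ hq hne hqn
  have hle : n.primeFactorsList.length ≤ 1 := by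
    by_contra! hlt
    exact hsq (hn ▸ pow_dvd_pow p hlt)
  have : n ≤ p := hn ▸ (Nat.pow_le_pow_right hp.pos hle).trans_eq (pow_one p)
  omega

theorem orderOf_eq_prime_pow_of_dvd_geom_sum {p q b j : ℕ} (hp : p.Prime) (hq : q.Prime)
    (hqp : q ≠ p) (hdvd : q ∣ ∑ i ∈ range p, (b ^ p ^ j) ^ i) :
    orderOf (b : ZMod q) = p ^ (j + 1) := by
  have := Fact.mk hp
  have hS : ∑ i ∈ range p, ((b : ZMod q) ^ p ^ j) ^ i = 0 := by
    exact_mod_cast (ZMod.natCast_eq_zero_iff _ q).2 hdvd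
  apply orderOf_eq_prime_pow
  · intro h1
    rw [h1] at hS
    simp only [one_pow, sum_const, card_range, nsmul_eq_mul, mul_one] at hS
    exact hqp ((Nat.prime_dvd_prime_iff_eq hq hp).mp ((ZMod.natCast_eq_zero_iff p q).mp hS))
  · have := geom_sum_mul ((b : ZMod q) ^ p ^ j) p
    rwa [hS, zero_mul, eq_comm, sub_eq_zero, ← pow_mul, ← pow_succ] at this

theorem exists_prime_orderOf_eq_prime_pow {b p i : ℕ} (hb : 2 ≤ b) (hp : p.Prime) (hi : i ≠ 0)
    (hexc : ¬ (p = 2 ∧ i = 1)) : ∃ q, q.Prime ∧ orderOf (b : ZMod q) = p ^ i := by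
  obtain ⟨j, rfl⟩ := Nat.exists_eq_add_one_of_ne_zero hi
  set c := b ^ p ^ j
  have hc : 2 ≤ c := hb.trans (Nat.le_self_pow (pow_ne_zero _ hp.ne_zero) b)
  have hlt : p < ∑ i ∈ range p, c ^ i := by
    calc p = ∑ _i ∈ range p, 1 := by simp
      _ < ∑ i ∈ range p, c ^ i := by
        refine sum_lt_sum (fun i _ => Nat.one_le_pow _ _ (by omega)) ⟨1, by simp [hp.one_lt], ?_⟩
        simpa using Nat.lt_of_succ_le hc
  have hsq : ¬ p ^ 2 ∣ ∑ i ∈ range p, c ^ i := by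
    rcases hp.eq_two_or_odd' with rfl | hodd
    · obtain ⟨j, rfl⟩ := Nat.exists_eq_add_one_of_ne_zero (show j ≠ 0 by omega)
      have hc_sq : c = (b ^ 2 ^ j) ^ 2 := by rw [← pow_mul, ← pow_succ]
      simpa [hc_sq, sum_range_succ, add_comm] using not_four_dvd_sq_add_one (b ^ 2 ^ j)
    · exact not_sq_dvd_geom_sum_of_odd hp hodd c
  obtain ⟨q, hq, hqp, hqS⟩ := exists_prime_ne_dvd_of_not_sq_dvd hp hlt hsq
  exact ⟨q, hq, orderOf_eq_prime_pow_of_dvd_geom_sum hp hq hqp hqS⟩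

theorem exists_prime_dvd_pow_sub_one_of_prime_pow_dvd {a k p i : ℕ} (ha : 2 ≤ a) (hk : k ≠ 0)
    (hp : p.Prime) (hi : i ≠ 0) (hexc : ¬ (p = 2 ∧ i = 1)) (hpik : p ^ i ∣ k) :
    ∃ q, q.Prime ∧ q ∣ a ^ k - 1 ∧ p ^ i ∣ q - 1 := by
  have hki : k / p ^ i ≠ 0 := (Nat.div_ne_zero_iff_of_dvd hpik).2 ⟨hk, (pow_pos hp.pos i).ne'⟩
  have hb : 2 ≤ a ^ (k / p ^ i) := ha.trans (Nat.le_self_pow hki a)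
  obtain ⟨q, hq, hord⟩ := exists_prime_orderOf_eq_prime_pow hb hp hi hexc
  have := Fact.mk hq
  have hb_pow : ((a ^ (k / p ^ i) : ℕ) : ZMod q) ^ p ^ i = 1 := by
    have := pow_orderOf_eq_one ((a ^ (k / p ^ i) : ℕ) : ZMod q)
    rwa [hord] at this
  have hb_ne : ((a ^ (k / p ^ i) : ℕ) : ZMod q) ≠ 0 := by
    intro h0
    rw [h0, zero_pow (pow_ne_zero i hp.ne_zero)] at hb_pow
    exact zero_ne_one hb_pow
  refine ⟨q, hq, ?_, hord ▸ ZMod.orderOf_dvd_card_sub_one hb_ne⟩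
  rw [← ZMod.natCast_eq_zero_iff, Nat.cast_sub (Nat.one_le_pow _ _ (by omega)),
    ← Nat.div_mul_cancel hpik, pow_mul, Nat.cast_pow, hb_pow, Nat.cast_one, sub_self]

theorem factorization_eq_of_pow_dvd_of_not_pow_succ_dvd {N a k : ℕ} (ha : a.Prime)
    (h1 : a ^ k ∣ N) (h2 : ¬ a ^ (k + 1) ∣ N) : N.factorization a = k := by
  have hN : N ≠ 0 := by rintro rfl; exact h2 (dvd_zero _)
  have := (ha.pow_dvd_iff_le_factorization hN).1 h1
  have := mt (ha.pow_dvd_iff_le_factorization hN).2 h2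
  omega

theorem pow_factorization_sub_one_dvd_uphi {N p : ℕ} (hp : p ∈ N.primeFactors) :
    p ^ N.factorization p - 1 ∣ uphi N :=
  dvd_prod_of_mem (fun p => p ^ N.factorization p - 1) hp

theorem sub_one_dvd_uphi_s6 {N p : ℕ} (hN : N ≠ 0) (hp : p.Prime) (hpN : p ∣ N) :
    p - 1 ∣ uphi N := by
  have := Nat.sub_dvd_pow_sub_pow p 1 (N.factorization p)
  rw [one_pow] at this
  exact this.trans (pow_factorization_sub_one_dvd_uphi (Nat.mem_primeFactors.2 ⟨hp, hpN, hN⟩))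

theorem stmt6 (N a k : ℕ) (hdvd : uphi N ∣ N) (ha : a.Prime) (hk : 1 ≤ k)
    (h1 : a ^ k ∣ N) (h2 : ¬ a ^ (k + 1) ∣ N) :
    k ∣ N := by
  have hN : N ≠ 0 := by rintro rfl; exact h2 (dvd_zero _)
  have haN : a ∣ N := (dvd_pow_self a (by omega)).trans h1
  have hak : a ^ k - 1 ∣ N := by
    have := pow_factorization_sub_one_dvd_uphi (Nat.mem_primeFactors.2 ⟨ha, haN, hN⟩)
    rw [factorization_eq_of_pow_dvd_of_not_pow_succ_dvd ha h1 h2] at this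
    exact this.trans hdvd
  refine (Nat.dvd_iff_prime_pow_dvd_dvd N k).2 fun p i hp hpik => ?_
  rcases eq_or_ne i 0 with rfl | hi
  · exact (pow_zero p).symm ▸ one_dvd N
  by_cases hexc : p = 2 ∧ i = 1
  · obtain ⟨rfl, rfl⟩ := hexc
    rcases ha.eq_two_or_odd' with rfl | hodd
    · simpa using haN
    · rw [pow_one]
      exact (even_iff_two_dvd.mp (Nat.Odd.sub_odd hodd odd_one)).trans
        ((sub_one_dvd_uphi_s6 hN ha haN).trans hdvd)
  obtain ⟨q, hq, hqa, hpq⟩ :=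
    exists_prime_dvd_pow_sub_one_of_prime_pow_dvd ha.two_le (by omega) hp hi hexc hpik
  exact hpq.trans ((sub_one_dvd_uphi_s6 hN hq (hqa.trans hak)).trans hdvd)
end

section
/- If φ*(N) divides N and N has exactly two distinct prime factors, then N = 6 or N = 12. -/
open Finset

lemma sub_one_dvd_of_sub_one_mul_dvd_mul {x y z : ℕ} (hx : 0 < x) (h : (x - 1) * z ∣ x * y) :
    x - 1 ∣ y :=
  ((Nat.coprime_self_sub_left hx).mpr (Nat.coprime_one_left x)).dvd_of_dvd_mul_left
    (dvd_of_mul_right_dvd h)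

lemma le_three_of_sub_one_dvd_add_one {x : ℕ} (h : x - 1 ∣ x + 1) : x ≤ 3 := by
  obtain rfl | hx := Nat.eq_zero_or_pos x
  · simp at h
  have h2 : x - 1 ∣ 2 :=
    (Nat.dvd_add_right dvd_rfl).mp (by rwa [show x + 1 = x - 1 + 2 by omega] at h)
  have := Nat.le_of_dvd two_pos h2
  omega

lemma mul_eq_six_or_twelve_of_sub_one_mul_sub_one_dvd {x y : ℕ} (hx : 2 ≤ x) (hy : 2 ≤ y)
    (hxy : x.Coprime y) (h : (x - 1) * (y - 1) ∣ x * y) : x * y = 6 ∨ x * y = 12 := by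
  wlog hlt : x < y generalizing x y
  · have hne : x ≠ y := by
      rintro rfl
      rw [Nat.coprime_self] at hxy
      omega
    rw [mul_comm x y]
    exact this hy hx hxy.symm (by rwa [mul_comm (x - 1), mul_comm x] at h) (by omega)
  have hx_dvd : x - 1 ∣ y := sub_one_dvd_of_sub_one_mul_dvd_mul (by omega) h
  have hy_dvd : y - 1 ∣ x :=
    sub_one_dvd_of_sub_one_mul_dvd_mul (by omega) (by rwa [mul_comm (x - 1), mul_comm x] at h)
  obtain rfl : y = x + 1 := by
    have := Nat.le_of_dvd (by omega) hy_dvd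
    omega
  have := le_three_of_sub_one_dvd_add_one hx_dvd
  interval_cases x <;> simp

section PrimeFactorsPair

variable {n p q : ℕ}

lemma eq_pow_mul_pow_of_primeFactors_eq_pair (hpq : p ≠ q) (h : n.primeFactors = {p, q}) :
    n = p ^ n.factorization p * q ^ n.factorization q := by
  have hn : n ≠ 0 := by
    rintro rfl
    exact insert_ne_empty p {q} (by simpa using h.symm)
  conv_lhs => rw [Nat.prod_primeFactors_pow_factorization hn, h, prod_pair hpq]

lemma uphi_of_primeFactors_eq_pair (hpq : p ≠ q) (h : n.primeFactors = {p, q}) :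
    uphi n = (p ^ n.factorization p - 1) * (q ^ n.factorization q - 1) := by
  rw [uphi, h, prod_pair hpq]

end PrimeFactorsPair

lemma two_le_pow_factorization {n p : ℕ} (hp : p ∈ n.primeFactors) :
    2 ≤ p ^ n.factorization p :=
  Nat.one_lt_pow (Finsupp.mem_support_iff.mp hp) (Nat.prime_of_mem_primeFactors hp).one_lt

theorem stmt7_general (N : ℕ) (hdvd : uphi N ∣ N)
    (hω : N.primeFactors.card = 2) :
    N = 6 ∨ N = 12 := by
  obtain ⟨p, q, hpq, hset⟩ := card_eq_two.mp hω
  have hp : p ∈ N.primeFactors := hset ▸ mem_insert_self p {q}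
  have hq : q ∈ N.primeFactors := hset ▸ mem_insert_of_mem (mem_singleton_self q)
  have hco : (p ^ N.factorization p).Coprime (q ^ N.factorization q) :=
    Nat.Coprime.pow _ _ <| (Nat.coprime_primes (Nat.prime_of_mem_primeFactors hp)
      (Nat.prime_of_mem_primeFactors hq)).mpr hpq
  have hN := eq_pow_mul_pow_of_primeFactors_eq_pair hpq hset
  rw [hN]
  refine mul_eq_six_or_twelve_of_sub_one_mul_sub_one_dvd (two_le_pow_factorization hp)
    (two_le_pow_factorization hq) hco ?_
  rwa [← hN, ← uphi_of_primeFactors_eq_pair hpq hset]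

theorem stmt7 (N : ℕ) (hN : 0 < N) (hdvd : uphi N ∣ N)
    (hω : N.primeFactors.card = 2) :
    N = 6 ∨ N = 12 :=
  stmt7_general N hdvd hω
end

section
/- Suppose N = 2φ*(N), N ∉ {1, 2, 6, 12, 168, 240}, and N has at most 7 distinct prime factors. Then 3 divides N. -/
/-!
Write `N = 2^a * m` and `m` odd with `k` prime factors. Each `p^e - 1` with `p` odd is even,
so `2^k ∣ φ*(m)` and `N = 2 φ*(N)` forces `a ≥ k + 1`. If `3 ∤ N`, the primes of `m`
dominate the first `k` primes `q_i ≥ 5`, and as `x / (x - 1)` decreases for `x > 1`,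
`2 = N / φ*(N) ≤ 2^(k+1) / (2^(k+1) - 1) * ∏_{i<k} q_i / (q_i - 1)`, which is `< 2` for
`1 ≤ k ≤ 6`. The case `m = 1` gives `N = 2`.
-/

open Finset Nat

lemma uphi_eq_prod_factorization (n : ℕ) :
    uphi n = n.factorization.prod fun p e => p ^ e - 1 := by
  rw [Finsupp.prod, Nat.support_factorization]; rfl

@[simp] lemma uphi_zero : uphi 0 = 1 := by simp [uphi]

@[simp] lemma uphi_one : uphi 1 = 1 := by simp [uphi]

lemma uphi_prime_pow {p a : ℕ} (hp : p.Prime) (ha : a ≠ 0) : uphi (p ^ a) = p ^ a - 1 := by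
  simp [uphi, Nat.primeFactors_prime_pow ha hp, hp.factorization_pow]

lemma Nat.Coprime.uphi_mul {m n : ℕ} (h : m.Coprime n) : uphi (m * n) = uphi m * uphi n := by
  rcases eq_or_ne m 0 with rfl | hm
  · simp [(Nat.coprime_zero_left n).1 h]
  rcases eq_or_ne n 0 with rfl | hn
  · simp [(Nat.coprime_zero_right m).1 h]
  simp only [uphi_eq_prod_factorization, Nat.factorization_mul hm hn]
  exact Finsupp.prod_add_index_of_disjoint (by simpa using h.disjoint_primeFactors) _

lemma two_pow_card_primeFactors_dvd_uphi {n : ℕ} (hn : Odd n) :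
    2 ^ n.primeFactors.card ∣ uphi n := by
  rw [← prod_const]
  refine prod_dvd_prod_of_dvd _ _ fun p hp => (Nat.Odd.sub_odd ?_ odd_one).two_dvd
  exact (hn.of_dvd_nat (Nat.dvd_of_mem_primeFactors hp)).pow

lemma cast_div_uphi_eq_prod {n : ℕ} (hn : n ≠ 0) :
    (n : ℚ) / uphi n =
      ∏ p ∈ n.primeFactors, (p ^ n.factorization p : ℚ) / (p ^ n.factorization p - 1) := by
  nth_rewrite 1 [← Nat.prod_factorization_pow_eq_self hn]
  rw [Finsupp.prod, Nat.support_factorization, uphi, prod_div_distrib]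
  push_cast
  congr 1
  refine prod_congr rfl fun p hp => ?_
  rw [Nat.cast_sub (Nat.one_le_pow _ _ (Nat.prime_of_mem_primeFactors hp).pos)]
  push_cast; rfl

lemma antitoneOn_div_sub_one {α : Type*} [Field α] [LinearOrder α] [IsStrictOrderedRing α] :
    AntitoneOn (fun x : α => x / (x - 1)) (Set.Ioi 1) := by
  intro x hx y hy hxy
  simp only [Set.mem_Ioi] at hx hy
  rw [div_le_div_iff₀ (by linarith) (by linarith)]
  nlinarith

lemma cast_div_uphi_le_prod {n : ℕ} (hn : n ≠ 0) :
    (n : ℚ) / uphi n ≤ ∏ p ∈ n.primeFactors, (p : ℚ) / (p - 1) := by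
  rw [cast_div_uphi_eq_prod hn]
  refine prod_le_prod (fun p hp => ?_) fun p hp => ?_
  · have : (1 : ℚ) ≤ p ^ n.factorization p :=
      one_le_pow₀ (by exact_mod_cast (prime_of_mem_primeFactors hp).one_le)
    exact div_nonneg (by linarith) (by linarith)
  · have hp1 : (1 : ℚ) < p := by exact_mod_cast (prime_of_mem_primeFactors hp).one_lt
    have hpe : (p : ℚ) ≤ p ^ n.factorization p :=
      le_self_pow₀ hp1.le (Finsupp.mem_support_iff.1 (by rwa [support_factorization]))
    exact antitoneOn_div_sub_one hp1 (hp1.trans_le hpe) hpe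

lemma prod_le_prod_nth {R : Type*} [CommSemiring R] [PartialOrder R] [IsOrderedRing R]
    {P : ℕ → Prop} [DecidablePred P] (hP : {x | P x}.Infinite) {f : ℕ → R}
    (hf : AntitoneOn f {x | P x}) (hf₀ : ∀ x, P x → 0 ≤ f x) {S : Finset ℕ}
    (hS : ∀ p ∈ S, P p) :
    ∏ p ∈ S, f p ≤ ∏ i ∈ range S.card, f (nth P i) := by
  induction S using Finset.induction_on_max with
  | empty => simp
  | insert a s has ih =>
    have hs : ∀ p ∈ s, P p := fun p hp => hS p (mem_insert_of_mem hp)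
    have ha : P a := hS a (mem_insert_self a s)
    have has' : a ∉ s := fun h => lt_irrefl a (has a h)
    have hcount : s.card ≤ count P a := by
      rw [count_eq_card_filter_range]
      exact card_le_card fun p hp => mem_filter.2 ⟨mem_range.2 (has p hp), hs p hp⟩
    have hnth : nth P s.card ≤ a := (nth_count ha) ▸ nth_monotone hP hcount
    rw [prod_insert has', card_insert_of_notMem has', prod_range_succ, mul_comm]
    exact mul_le_mul (ih hs) (hf (nth_mem_of_infinite hP _) ha hnth) (hf₀ _ ha)
      (prod_nonneg fun i _ => hf₀ _ (nth_mem_of_infinite hP _))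

lemma infinite_setOf_prime_and_le (m : ℕ) : {p | p.Prime ∧ m ≤ p}.Infinite :=
  Set.infinite_of_forall_exists_gt fun a =>
    let ⟨p, hp, hpp⟩ := Nat.exists_infinite_primes (a + m + 1)
    ⟨p, ⟨hpp, by omega⟩, by omega⟩

lemma nth_eq_of_count_eq {P : ℕ → Prop} [DecidablePred P] {n i : ℕ} (hn : P n)
    (h : count P n = i) : nth P i = n :=
  h ▸ nth_count hn

noncomputable def nthPrimeGeFive (i : ℕ) : ℕ := nth (fun p => p.Prime ∧ 5 ≤ p) i

lemma two_pow_div_mul_prod_nthPrimeGeFive_lt_two {k : ℕ} (hk₀ : 0 < k) (hk : k ≤ 6) :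
    (2 ^ (k + 1) : ℚ) / (2 ^ (k + 1) - 1) *
      ∏ i ∈ range k, (nthPrimeGeFive i : ℚ) / (nthPrimeGeFive i - 1) < 2 := by
  have h0 : nthPrimeGeFive 0 = 5 := nth_eq_of_count_eq (by norm_num) (by decide)
  have h1 : nthPrimeGeFive 1 = 7 := nth_eq_of_count_eq (by norm_num) (by decide)
  have h2 : nthPrimeGeFive 2 = 11 := nth_eq_of_count_eq (by norm_num) (by decide)
  have h3 : nthPrimeGeFive 3 = 13 := nth_eq_of_count_eq (by norm_num) (by decide)
  have h4 : nthPrimeGeFive 4 = 17 := nth_eq_of_count_eq (by norm_num) (by decide)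
  have h5 : nthPrimeGeFive 5 = 19 := nth_eq_of_count_eq (by norm_num) (by decide)
  interval_cases k <;> norm_num [prod_range_succ, h0, h1, h2, h3, h4, h5]

lemma five_le_of_mem_primeFactors {n p : ℕ} (hn : Odd n) (hn3 : ¬ 3 ∣ n)
    (hp : p ∈ n.primeFactors) : 5 ≤ p := by
  obtain ⟨hp, hpn, -⟩ := Nat.mem_primeFactors.1 hp
  refine hp.five_le_of_ne_two_of_ne_three ?_ ?_ <;> rintro rfl
  · exact (Nat.not_even_iff_odd.2 hn) (even_iff_two_dvd.2 hpn)
  · exact hn3 hpn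

lemma cast_div_uphi_le_prod_nthPrimeGeFive {n : ℕ} (hn : Odd n) (hn3 : ¬ 3 ∣ n) :
    (n : ℚ) / uphi n ≤
      ∏ i ∈ range n.primeFactors.card, (nthPrimeGeFive i : ℚ) / (nthPrimeGeFive i - 1) := by
  refine (cast_div_uphi_le_prod hn.pos.ne').trans <|
    prod_le_prod_nth (infinite_setOf_prime_and_le 5) ?_ ?_ fun p hp =>
      ⟨prime_of_mem_primeFactors hp, five_le_of_mem_primeFactors hn hn3 hp⟩
  · intro p hp q hq hpq
    exact antitoneOn_div_sub_one (Set.mem_Ioi.2 (by exact_mod_cast hp.1.one_lt))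
      (Set.mem_Ioi.2 (by exact_mod_cast hq.1.one_lt)) (by exact_mod_cast hpq)
  · intro p hp
    exact div_nonneg (Nat.cast_nonneg p) (by simpa using hp.1.one_le)

lemma card_primeFactors_lt_of_two_pow_mul_eq {a m : ℕ} (hm : Odd m)
    (h : 2 ^ a * m = 2 * uphi (2 ^ a * m)) : m.primeFactors.card < a := by
  have hcop : Coprime (2 ^ a) m := (Nat.coprime_two_left.2 hm).pow_left a
  have hdvd : 2 ^ (m.primeFactors.card + 1) ∣ 2 ^ a * m := by
    rw [h, hcop.uphi_mul, pow_succ']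
    exact mul_dvd_mul_left 2 (dvd_mul_of_dvd_right (two_pow_card_primeFactors_dvd_uphi hm) _)
  have h2a := (Nat.coprime_two_left.2 hm).pow_left _ |>.dvd_of_dvd_mul_right hdvd
  exact Nat.pow_dvd_pow_iff_le_right one_lt_two |>.1 h2a

lemma cast_div_uphi_two_pow_mul_lt_two {a m : ℕ} (hm : Odd m) (hm3 : ¬ 3 ∣ m) (hm1 : m ≠ 1)
    (hk : m.primeFactors.card ≤ 6) (ha : m.primeFactors.card < a) :
    ((2 ^ a * m : ℕ) : ℚ) / uphi (2 ^ a * m) < 2 := by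
  set k := m.primeFactors.card
  have hk0 : 0 < k := card_pos.2 (Nat.nonempty_primeFactors.2 (by have := hm.pos; omega))
  have hcop : Coprime (2 ^ a) m := (Nat.coprime_two_left.2 hm).pow_left a
  have h2 : (1 : ℚ) < 2 ^ (k + 1) := one_lt_pow₀ one_lt_two (by omega)
  have h2a : (2 ^ (k + 1) : ℚ) ≤ 2 ^ a := pow_le_pow_right₀ one_le_two ha
  calc ((2 ^ a * m : ℕ) : ℚ) / uphi (2 ^ a * m)
      = (2 ^ a : ℚ) / (2 ^ a - 1) * (m / uphi m) := by
        rw [hcop.uphi_mul, uphi_prime_pow prime_two (by omega), Nat.cast_mul, Nat.cast_mul,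
          Nat.cast_sub Nat.one_le_two_pow, mul_div_mul_comm]
        push_cast; rfl
    _ ≤ (2 ^ (k + 1) : ℚ) / (2 ^ (k + 1) - 1) *
          ∏ i ∈ range k, (nthPrimeGeFive i : ℚ) / (nthPrimeGeFive i - 1) :=
        mul_le_mul (antitoneOn_div_sub_one h2 (h2.trans_le h2a) h2a)
          (cast_div_uphi_le_prod_nthPrimeGeFive hm hm3) (by positivity)
          (div_nonneg (by positivity) (by linarith))
    _ < 2 := two_pow_div_mul_prod_nthPrimeGeFive_lt_two hk0 hk

theorem stmt12 (N : ℕ) (hN : N = 2 * uphi N)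
    (hne : N ∉ ({1, 2, 6, 12, 168, 240} : Set ℕ))
    (hω : N.primeFactors.card ≤ 7) :
    3 ∣ N := by
  by_contra h3
  have hN0 : N ≠ 0 := by rintro rfl; simp at hN
  obtain ⟨a, m, hm, rfl⟩ := exists_eq_two_pow_mul_odd hN0
  have hcop : Coprime (2 ^ a) m := (Nat.coprime_two_left.2 hm).pow_left a
  have ha := card_primeFactors_lt_of_two_pow_mul_eq hm hN
  have hk : m.primeFactors.card ≤ 6 := by
    rw [hcop.primeFactors_mul, card_union_of_disjoint hcop.disjoint_primeFactors,
      primeFactors_prime_pow (by omega) prime_two, card_singleton] at hω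
    omega
  rcases eq_or_ne m 1 with rfl | hm1
  · rw [mul_one, uphi_prime_pow prime_two (by omega)] at hN
    have : 2 ^ a = 2 := by omega
    exact hne (by simp [this])
  · have hlt :=
      cast_div_uphi_two_pow_mul_lt_two hm (fun h => h3 (dvd_mul_of_dvd_right h _)) hm1 hk ha
    have hpos : (0 : ℚ) < uphi (2 ^ a * m) := by
      exact_mod_cast Nat.pos_of_ne_zero fun h => hN0 (by rw [hN, h])
    rw [div_lt_iff₀ hpos] at hlt
    exact hlt.ne (by exact_mod_cast hN)
end

section
/- Suppose N = 2φ*(N), N has at most 7 distinct prime factors, and N ∉ {1, 2, 6, 12, 168, 240}. Then 3 exactly divides N (i.e., 3 | N but 9 ∤ N). -/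
open Finset

/-- `q - 1` has this form for every prime power `q > 1` coprime to 6. -/
def Admissible (d : ℕ) : Prop := 4 ≤ d ∧ (d % 6 = 0 ∨ d % 6 = 4)

def nextAdmissible (m : ℕ) : ℕ :=
  if m ≤ 4 then 4
  else if m % 6 = 0 ∨ m % 6 = 4 then m
  else if m % 6 = 5 then m + 1
  else m + 4 - m % 6

/-- The product of `1 + 1/d` over the `k` smallest admissible `d ≥ m`. -/
def prodBound : ℕ → ℕ → ℚ
  | 0, _ => 1
  | k + 1, m => (1 + 1 / (nextAdmissible m : ℚ)) * prodBound k (nextAdmissible m + 1)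

theorem Admissible.two_dvd {d : ℕ} (hd : Admissible d) : 2 ∣ d := by
  unfold Admissible at hd; omega

theorem admissible_nextAdmissible (m : ℕ) : Admissible (nextAdmissible m) := by
  unfold nextAdmissible Admissible; split_ifs <;> omega

theorem le_nextAdmissible (m : ℕ) : m ≤ nextAdmissible m := by
  unfold nextAdmissible; split_ifs <;> omega

theorem nextAdmissible_le {d m : ℕ} (hd : Admissible d) (hmd : m ≤ d) : nextAdmissible m ≤ d := by
  unfold Admissible at hd; unfold nextAdmissible; split_ifs <;> omega

theorem nextAdmissible_mono : Monotone nextAdmissible := fun _ m' h =>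
  nextAdmissible_le (admissible_nextAdmissible m') (h.trans (le_nextAdmissible m'))

theorem one_le_one_add_inv (n : ℕ) : (1 : ℚ) ≤ 1 + 1 / (n : ℚ) :=
  le_add_of_nonneg_right (by positivity)

theorem one_le_prodBound (k m : ℕ) : 1 ≤ prodBound k m := by
  induction k generalizing m with
  | zero => simp [prodBound]
  | succ k ih => exact one_le_mul_of_one_le_of_one_le (one_le_one_add_inv _) (ih _)

theorem prodBound_antitone (k : ℕ) : Antitone (prodBound k) := by
  induction k with
  | zero => intro _ _ _; simp [prodBound]
  | succ k ih =>
    intro m m' h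
    have hnext := nextAdmissible_mono h
    have hpos : 0 < nextAdmissible m := (admissible_nextAdmissible m).1.trans_lt' (by norm_num)
    exact mul_le_mul (by gcongr) (ih (by omega))
      (zero_le_one.trans (one_le_prodBound _ _))
      (zero_le_one.trans (one_le_one_add_inv _))

theorem prod_le_prodBound (D : Finset ℕ) (m : ℕ) (hD : ∀ d ∈ D, Admissible d ∧ m ≤ d) :
    ∏ d ∈ D, (1 + 1 / (d : ℚ)) ≤ prodBound D.card m := by
  induction D using Finset.induction_on_min generalizing m with
  | empty => simp [prodBound]
  | insert a D ha ih =>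
    obtain ⟨hadm, hma⟩ := hD a (mem_insert_self a D)
    have haD : a ∉ D := fun h => (ha a h).false
    have hnext := nextAdmissible_le hadm hma
    rw [prod_insert haD, card_insert_of_notMem haD, prodBound]
    have hpos : 0 < nextAdmissible m := (admissible_nextAdmissible m).1.trans_lt' (by norm_num)
    refine mul_le_mul (by gcongr) ?_ (prod_nonneg fun _ _ => by positivity)
      (zero_le_one.trans (one_le_one_add_inv _))
    · refine ih _ fun d hd => ⟨(hD d (mem_insert_of_mem hd)).1, ?_⟩
      have := ha d hd
      omega

/-- Abstracts the odd part of a solution of `N = 2 φ*(N)`, with `a = v₂(N)`: `D` collects `q - 1`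
for the prime powers `q ∥ N` coprime to 6, `c` is the factor `3^e/(3^e - 1)` of the power of 3
(or 1), and `s` is what remains of `a = 1 + ∑ v₂(q - 1)`. -/
def Realizable (c : ℚ) (s m k : ℕ) : Prop :=
  ∃ D : Finset ℕ, D.card = k ∧ (∀ d ∈ D, Admissible d ∧ m ≤ d) ∧
    ∃ a, s + ∑ d ∈ D, d.factorization 2 ≤ a ∧ c * ∏ d ∈ D, (1 + 1 / (d : ℚ)) = 2 - 2 / 2 ^ a

namespace Realizable

variable {c : ℚ} {s m k : ℕ}

theorem of_le {s' : ℕ} (h : Realizable c s m k) (hs : s' ≤ s) : Realizable c s' m k := by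
  obtain ⟨D, hcard, hD, a, ha, heq⟩ := h
  exact ⟨D, hcard, hD, a, by omega, heq⟩

theorem two_sub_le_mul_prodBound {M : ℕ} (h : Realizable c s m k) (hc : 0 ≤ c) (hM : M ≤ m) :
    2 - 2 / 2 ^ (s + k) ≤ c * prodBound k M := by
  obtain ⟨D, rfl, hD, a, ha, heq⟩ := h
  have hcard : D.card ≤ ∑ d ∈ D, d.factorization 2 := by
    rw [card_eq_sum_ones]
    refine sum_le_sum fun d hd => ?_
    have hadm := (hD d hd).1
    exact (Nat.prime_two.pow_dvd_iff_le_factorization (by have := hadm.1; omega)).1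
      (by simpa using hadm.two_dvd)
  calc 2 - 2 / 2 ^ (s + D.card) ≤ 2 - 2 / 2 ^ a := by
        gcongr
        · norm_num
        · omega
    _ = c * ∏ d ∈ D, (1 + 1 / (d : ℚ)) := heq.symm
    _ ≤ c * prodBound D.card m :=
        mul_le_mul_of_nonneg_left (prod_le_prodBound D m hD) hc
    _ ≤ c * prodBound D.card M := mul_le_mul_of_nonneg_left (prodBound_antitone _ hM) hc

theorem lt_two (h : Realizable c s m 0) : c < 2 := by
  obtain ⟨D, hcard, -, a, -, heq⟩ := h
  rw [card_eq_zero.1 hcard, prod_empty, mul_one] at heq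
  rw [heq]
  have : (0 : ℚ) < 2 / 2 ^ a := by positivity
  linarith

theorem exists_min (h : Realizable c s m (k + 1)) :
    ∃ d, Admissible d ∧ m ≤ d ∧ Realizable c s d (k + 1) ∧
      ∀ v, 2 ^ v ∣ d → Realizable (c * (1 + 1 / (d : ℚ))) (s + v) (d + 1) k := by
  obtain ⟨D, hcard, hD, a, ha, heq⟩ := h
  have hne : D.Nonempty := card_pos.1 (by omega)
  set d := D.min' hne
  have hdD : d ∈ D := D.min'_mem hne
  refine ⟨d, (hD d hdD).1, (hD d hdD).2,
    ⟨D, hcard, fun x hx => ⟨(hD x hx).1, D.min'_le x hx⟩, a, ha, heq⟩, fun v hv => ?_⟩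
  have hv : v ≤ d.factorization 2 :=
    (Nat.prime_two.pow_dvd_iff_le_factorization (by have := (hD d hdD).1.1; omega)).1 hv
  refine ⟨D.erase d, by rw [card_erase_of_mem hdD, hcard]; rfl,
    fun x hx => ⟨(hD x (mem_of_mem_erase hx)).1, D.min'_lt_of_mem_erase_min' hne hx⟩, a, ?_, ?_⟩
  · rw [← add_sum_erase D _ hdD] at ha
    omega
  · rw [← heq, ← mul_prod_erase D _ hdD, mul_assoc]

theorem exists_min_lt {M : ℕ} (h : Realizable c s m (k + 1)) (hc : 0 ≤ c)
    (hM : c * prodBound (k + 1) M < 2 - 2 / 2 ^ (s + (k + 1))) :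
    ∃ d, Admissible d ∧ m ≤ d ∧ d < M ∧
      ∀ v, 2 ^ v ∣ d → Realizable (c * (1 + 1 / (d : ℚ))) (s + v) (d + 1) k := by
  obtain ⟨d, hadm, hmd, hd, hstep⟩ := h.exists_min
  refine ⟨d, hadm, hmd, ?_, hstep⟩
  by_contra! hMd
  exact (hd.two_sub_le_mul_prodBound hc hMd).not_gt hM

theorem exists_last (h : Realizable c s m 1) (hc : 0 ≤ c) :
    ∃ d : ℕ, Admissible d ∧ (2 - 2 / 2 ^ (s + 1)) * d ≤ c * (d + 1) ∧ c * (d + 1) < 2 * d := by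
  obtain ⟨d, hadm, -, -, hstep⟩ := h.exists_min
  have h0 := hstep 1 (by simpa using hadm.two_dvd)
  have hd : (0 : ℚ) < d := by have := hadm.1; positivity
  have hc' : 0 ≤ c * (1 + 1 / (d : ℚ)) := by positivity
  have hlo := h0.two_sub_le_mul_prodBound hc' le_rfl
  have hhi := h0.lt_two
  rw [prodBound, mul_one, add_zero] at hlo
  have key : c * (1 + 1 / (d : ℚ)) * d = c * (d + 1) := by field_simp
  refine ⟨d, hadm, ?_, ?_⟩
  · rw [← key]; exact mul_le_mul_of_nonneg_right hlo hd.le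
  · rw [← key]; exact mul_lt_mul_of_pos_right hhi hd

end Realizable

theorem not_realizable_nine_eighths : ¬ Realizable (9 / 8) 4 4 5 := by
  intro h
  -- `D` must begin with 4, 6, 10 and then 12 or 16; its last element is then squeezed strictly
  -- between two consecutive integers (or onto the inadmissible 44).
  obtain ⟨d₁, hd₁, h4, hd₁6, h₁⟩ := h.exists_min_lt (M := 6) (by norm_num)
    (by norm_num [prodBound, nextAdmissible])
  obtain rfl : d₁ = 4 := by unfold Admissible at hd₁; omega
  have h₁ := h₁ 2 (by norm_num)
  norm_num at h₁
  obtain ⟨d₂, hd₂, h5, hd₂7, h₂⟩ := h₁.exists_min_lt (M := 7) (by norm_num)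
    (by norm_num [prodBound, nextAdmissible])
  obtain rfl : d₂ = 6 := by unfold Admissible at hd₂; omega
  have h₂ := h₂ 1 (by norm_num)
  norm_num at h₂
  obtain ⟨d₃, hd₃, h7, hd₃13, h₃⟩ := h₂.exists_min_lt (M := 13) (by norm_num)
    (by norm_num [prodBound, nextAdmissible])
  obtain rfl | rfl : d₃ = 10 ∨ d₃ = 12 := by unfold Admissible at hd₃; omega
  · have h₃ := h₃ 1 (by norm_num)
    norm_num at h₃
    obtain ⟨d₄, hd₄, h11, hd₄17, h₄⟩ := h₃.exists_min_lt (M := 17) (by norm_num)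
      (by norm_num [prodBound, nextAdmissible])
    obtain rfl | rfl : d₄ = 12 ∨ d₄ = 16 := by unfold Admissible at hd₄; omega
    · obtain ⟨d, hd, hlo, hhi⟩ := (h₄ 2 (by norm_num)).exists_last (by norm_num)
      norm_num at hlo hhi
      have h43 : 43 < d := by exact_mod_cast (by linarith : (43 : ℚ) < d)
      have h45 : d < 45 := by exact_mod_cast (by linarith : (d : ℚ) < 45)
      unfold Admissible at hd; omega
    · obtain ⟨d, -, hlo, hhi⟩ := (h₄ 4 (by norm_num)).exists_last (by norm_num)
      norm_num at hlo hhi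
      have h23 : 23 < d := by exact_mod_cast (by linarith : (23 : ℚ) < d)
      have h24 : d < 24 := by exact_mod_cast (by linarith : (d : ℚ) < 24)
      omega
  · have := (h₃ 2 (by norm_num)).two_sub_le_mul_prodBound (by norm_num) le_rfl
    norm_num [prodBound, nextAdmissible] at this

theorem not_realizable_one {k : ℕ} (hk : 1 ≤ k) (hk6 : k ≤ 6) : ¬ Realizable 1 1 4 k := by
  intro h
  have := h.two_sub_le_mul_prodBound zero_le_one le_rfl
  interval_cases k <;> norm_num [prodBound, nextAdmissible] at this

theorem not_realizable_three_pow {e k : ℕ} (he : 2 ≤ e) (hk : k ≤ 5) :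
    ¬ Realizable (1 + 1 / ((3 ^ e - 1 : ℕ) : ℚ)) (1 + (3 ^ e - 1).factorization 2) 4 k := by
  intro h
  have h3e : 9 ≤ 3 ^ e := by
    calc 9 = 3 ^ 2 := rfl
      _ ≤ 3 ^ e := Nat.pow_le_pow_right (by norm_num) he
  rcases he.eq_or_lt with rfl | he3
  · have h4 : Realizable (9 / 8) 4 4 k := by
      have h8 : 3 ≤ (3 ^ 2 - 1).factorization 2 :=
        (Nat.prime_two.pow_dvd_iff_le_factorization (n := 3 ^ 2 - 1) (by norm_num)).1
          (by norm_num)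
      have := h.of_le (s' := 4) (by omega)
      norm_num at this
      exact this
    rcases hk.lt_or_eq with hk4 | rfl
    · have := h4.two_sub_le_mul_prodBound (by norm_num) le_rfl
      interval_cases k <;> norm_num [prodBound, nextAdmissible] at this
    · exact not_realizable_nine_eighths h4
  · have h27 : (27 : ℚ) ≤ ((3 ^ e - 1 : ℕ) : ℚ) + 1 := by
      have : 27 ≤ 3 ^ e := by
        calc 27 = 3 ^ 3 := rfl
          _ ≤ 3 ^ e := Nat.pow_le_pow_right (by norm_num) he3
      exact_mod_cast (by omega : 27 ≤ 3 ^ e - 1 + 1)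
    have hc27 : 1 + 1 / ((3 ^ e - 1 : ℕ) : ℚ) ≤ 27 / 26 := by
      have : (1 : ℚ) / ((3 ^ e - 1 : ℕ) : ℚ) ≤ 1 / 26 := by
        gcongr; linarith
      linarith
    have h2 : 1 ≤ (3 ^ e - 1).factorization 2 :=
      (Nat.prime_two.pow_dvd_iff_le_factorization (by omega)).1
        (by rw [pow_one, ← even_iff_two_dvd]; exact (Nat.Odd.sub_odd (Odd.pow (by decide)) odd_one))
    have hc : (0 : ℚ) ≤ 1 + 1 / ((3 ^ e - 1 : ℕ) : ℚ) := by positivity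
    have := (h.of_le (s' := 2) (by omega)).two_sub_le_mul_prodBound hc le_rfl
    have := this.trans (mul_le_mul_of_nonneg_right hc27 (zero_le_one.trans (one_le_prodBound k 4)))
    interval_cases k <;> norm_num [prodBound, nextAdmissible] at this

theorem admissible_pow_sub_one {p e : ℕ} (hp : p.Prime) (h2 : p ≠ 2) (h3 : p ≠ 3) (he : e ≠ 0) :
    Admissible (p ^ e - 1) := by
  have h5 : 5 ≤ p ^ e := by
    have : 5 ≤ p := by
      have := hp.two_le
      by_contra! hlt
      interval_cases p <;> simp_all +decide
    exact this.trans (Nat.le_self_pow he p)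
  have hodd : p ^ e % 2 = 1 := Nat.odd_iff.1 ((hp.odd_of_ne_two h2).pow)
  have hnot3 : ¬ 3 ∣ p ^ e := fun h =>
    h3 ((Nat.prime_dvd_prime_iff_eq Nat.prime_three hp).1 (Nat.prime_three.dvd_of_dvd_pow h)).symm
  unfold Admissible
  omega

section EqTwoMulUphi

variable {N : ℕ}

theorem two_le_ordProj_of_mem_primeFactors {p : ℕ} (hp : p ∈ N.primeFactors) : 2 ≤ ordProj[p] N :=
  (Nat.prime_of_mem_primeFactors hp).two_le.trans
    (Nat.le_self_pow (Finsupp.mem_support_iff.1 hp) p)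

theorem ne_zero_of_eq_two_mul_uphi (hN : N = 2 * uphi N) : N ≠ 0 := by
  rintro rfl
  simp [uphi] at hN

theorem two_mem_primeFactors_of_eq_two_mul_uphi (hN : N = 2 * uphi N) : 2 ∈ N.primeFactors :=
  Nat.mem_primeFactors.2 ⟨Nat.prime_two, ⟨uphi N, hN⟩, ne_zero_of_eq_two_mul_uphi hN⟩

theorem factorization_two_of_eq_two_mul_uphi (hN : N = 2 * uphi N) :
    N.factorization 2 = 1 + ∑ p ∈ N.primeFactors.erase 2, (ordProj[p] N - 1).factorization 2 := by
  have hq := fun p (hp : p ∈ N.primeFactors) => two_le_ordProj_of_mem_primeFactors hp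
  have huphi : uphi N ≠ 0 := prod_ne_zero_iff.2 fun p hp => by have := hq p hp; omega
  have hodd : (ordProj[2] N - 1).factorization 2 = 0 := by
    refine Nat.factorization_eq_zero_of_not_dvd ?_
    have h2 := two_mem_primeFactors_of_eq_two_mul_uphi hN
    have := hq 2 h2
    have : 2 ∣ ordProj[2] N :=
      dvd_pow_self 2 (Finsupp.mem_support_iff.1 h2)
    omega
  conv_lhs => rw [hN]
  rw [Nat.factorization_mul two_ne_zero huphi, Finsupp.add_apply,
    Nat.Prime.factorization_self Nat.prime_two, uphi,
    Nat.factorization_prod fun p hp => by have := hq p hp; omega, Finset.sum_apply',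
    ← add_sum_erase _ _ (two_mem_primeFactors_of_eq_two_mul_uphi hN), hodd, zero_add]

theorem prod_one_add_inv_of_eq_two_mul_uphi (hN : N = 2 * uphi N) :
    ∏ p ∈ N.primeFactors, (1 + 1 / ((ordProj[p] N - 1 : ℕ) : ℚ)) = 2 := by
  have hq := fun p (hp : p ∈ N.primeFactors) => two_le_ordProj_of_mem_primeFactors hp
  have huphi : (uphi N : ℚ) ≠ 0 := by
    exact_mod_cast prod_ne_zero_iff.2 fun p hp => by have := hq p hp; omega
  calc ∏ p ∈ N.primeFactors, (1 + 1 / ((ordProj[p] N - 1 : ℕ) : ℚ))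
      = (∏ p ∈ N.primeFactors, (ordProj[p] N : ℚ)) / uphi N := by
        rw [uphi, Nat.cast_prod, ← prod_div_distrib]
        refine prod_congr rfl fun p hp => ?_
        have := hq p hp
        have hx : ((ordProj[p] N - 1 : ℕ) : ℚ) = ordProj[p] N - 1 := by
          push_cast [Nat.cast_sub (by omega : 1 ≤ ordProj[p] N)]; ring
        have hx0 : (ordProj[p] N : ℚ) - 1 ≠ 0 := by
          have : (2 : ℚ) ≤ ordProj[p] N := by exact_mod_cast this
          linarith
        rw [hx]
        field_simp
        ring
    _ = 2 := by
        have hprod : ∏ p ∈ N.primeFactors, (ordProj[p] N : ℚ) = N := by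
          exact_mod_cast Nat.prod_factorization_pow_eq_self (ne_zero_of_eq_two_mul_uphi hN)
        rw [hprod, div_eq_iff huphi]
        exact_mod_cast hN

theorem prod_erase_two_of_eq_two_mul_uphi (hN : N = 2 * uphi N) :
    ∏ p ∈ N.primeFactors.erase 2, (1 + 1 / ((ordProj[p] N - 1 : ℕ) : ℚ)) =
      2 - 2 / 2 ^ N.factorization 2 := by
  have h2 := two_mem_primeFactors_of_eq_two_mul_uphi hN
  have hall := prod_one_add_inv_of_eq_two_mul_uphi hN
  rw [← mul_prod_erase _ _ h2] at hall
  have hq := two_le_ordProj_of_mem_primeFactors h2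
  have hx : ((ordProj[2] N - 1 : ℕ) : ℚ) = 2 ^ N.factorization 2 - 1 := by
    push_cast [Nat.cast_sub (by omega : 1 ≤ ordProj[2] N)]; ring
  have hA : (2 : ℚ) ≤ 2 ^ N.factorization 2 := by exact_mod_cast hq
  rw [hx] at hall
  have hA1 : (2 : ℚ) ^ N.factorization 2 - 1 ≠ 0 := by linarith
  field_simp at hall ⊢
  linarith

theorem eq_two_of_eq_two_mul_uphi (hN : N = 2 * uphi N) (h : N.primeFactors.erase 2 = ∅) :
    N = 2 := by
  have hv := factorization_two_of_eq_two_mul_uphi hN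
  rw [h, sum_empty, add_zero] at hv
  rw [← Nat.prod_factorization_pow_eq_self (ne_zero_of_eq_two_mul_uphi hN)]
  change ∏ p ∈ N.primeFactors, ordProj[p] N = 2
  rw [← mul_prod_erase _ _ (two_mem_primeFactors_of_eq_two_mul_uphi hN), h, prod_empty, hv]
  rfl

theorem realizable_of_subset {T : Finset ℕ} {c : ℚ} {s a : ℕ} (hT : T ⊆ N.primeFactors)
    (h2 : 2 ∉ T) (h3 : 3 ∉ T)
    (hprod : c * ∏ p ∈ T, (1 + 1 / ((ordProj[p] N - 1 : ℕ) : ℚ)) = 2 - 2 / 2 ^ a)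
    (hsum : s + ∑ p ∈ T, (ordProj[p] N - 1).factorization 2 ≤ a) :
    Realizable c s 4 T.card := by
  have hprime : ∀ p ∈ T, p.Prime := fun p hp => Nat.prime_of_mem_primeFactors (hT hp)
  have hq : ∀ p ∈ T, 2 ≤ ordProj[p] N := fun p hp => two_le_ordProj_of_mem_primeFactors (hT hp)
  have hinj : Set.InjOn (fun p => ordProj[p] N - 1) T := by
    intro p hp r hr h
    have hpr : ordProj[p] N = ordProj[r] N := by
      have := hq p hp; have := hq r hr; simp only at h; omega
    have hdvd : p ∣ ordProj[r] N :=
      hpr ▸ Nat.dvd_ordProj_of_dvd (Nat.mem_primeFactors.1 (hT hp)).2.2 (hprime p hp)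
        (Nat.dvd_of_mem_primeFactors (hT hp))
    exact (Nat.prime_dvd_prime_iff_eq (hprime p hp) (hprime r hr)).1
      ((hprime p hp).dvd_of_dvd_pow hdvd)
  refine ⟨T.image fun p => ordProj[p] N - 1, card_image_of_injOn hinj, ?_, a, ?_, ?_⟩
  · simp only [mem_image]
    rintro _ ⟨p, hp, rfl⟩
    have hadm := admissible_pow_sub_one (hprime p hp) (fun h => h2 (h ▸ hp)) (fun h => h3 (h ▸ hp))
      ((Finsupp.mem_support_iff (f := N.factorization)).1 (hT hp))
    exact ⟨hadm, hadm.1⟩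
  · rwa [sum_image hinj]
  · rwa [prod_image hinj]

end EqTwoMulUphi

theorem stmt13 (N : ℕ) (hN : N = 2 * uphi N)
    (hω : N.primeFactors.card ≤ 7)
    (hne : N ∉ ({1, 2, 6, 12, 168, 240} : Set ℕ)) :
    3 ∣ N ∧ ¬ 9 ∣ N := by
  have h2 := two_mem_primeFactors_of_eq_two_mul_uphi hN
  have hcard : (N.primeFactors.erase 2).card ≤ 6 := by rw [card_erase_of_mem h2]; omega
  have h3 : 3 ∈ N.primeFactors := by
    by_contra h3
    have hR : Realizable 1 1 4 (N.primeFactors.erase 2).card :=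
      realizable_of_subset (erase_subset 2 _) (notMem_erase 2 _) (fun h => h3 (mem_of_mem_erase h))
        (by rw [one_mul, prod_erase_two_of_eq_two_mul_uphi hN])
        (factorization_two_of_eq_two_mul_uphi hN).ge
    rcases Nat.eq_zero_or_pos (N.primeFactors.erase 2).card with h0 | hpos
    · exact hne (by simp [eq_two_of_eq_two_mul_uphi hN (card_eq_zero.1 h0)])
    · exact not_realizable_one hpos hcard hR
  refine ⟨Nat.dvd_of_mem_primeFactors h3, fun h9 => ?_⟩
  have he : 2 ≤ N.factorization 3 :=
    (Nat.prime_three.pow_dvd_iff_le_factorization (ne_zero_of_eq_two_mul_uphi hN)).1 h9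
  have h3' : 3 ∈ N.primeFactors.erase 2 := mem_erase.2 ⟨by norm_num, h3⟩
  refine not_realizable_three_pow he (by rw [card_erase_of_mem h3']; omega)
    (realizable_of_subset (T := (N.primeFactors.erase 2).erase 3) (a := N.factorization 2)
      ((erase_subset 3 _).trans (erase_subset 2 _))
      (fun h => notMem_erase 2 _ (mem_of_mem_erase h)) (notMem_erase 3 _) ?_ ?_)
  · rw [mul_prod_erase _ (fun p => 1 + 1 / ((ordProj[p] N - 1 : ℕ) : ℚ)) h3',
      prod_erase_two_of_eq_two_mul_uphi hN]
  · rw [factorization_two_of_eq_two_mul_uphi hN, ← add_sum_erase _ _ h3', add_assoc]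
end

section
/- If N is an integer with φ*(N) dividing N, N ∉ {1, 2, 6, 12, 168, 240}, and N/φ*(N) ≥ 3, then N has at least 8 distinct prime factors. -/
open Finset Nat

theorem Finset.prod_le_prod_range_nth {R : Type*} [CommMonoidWithZero R] [PartialOrder R]
    [ZeroLEOneClass R] [PosMulMono R] [MulPosMono R] {P : ℕ → Prop} {g : ℕ → R}
    (hg : AntitoneOn g {n | P n}) (hg₀ : ∀ n, P n → 0 ≤ g n) (s : Finset ℕ)
    (hs : ∀ n ∈ s, P n) : ∏ n ∈ s, g n ≤ ∏ i ∈ range #s, g (nth P i) := by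
  classical
  induction s using Finset.induction_on_max with
  | empty => simp
  | insert a s hlt ih =>
    have ha : a ∉ s := fun h => (hlt a h).false
    have hPa : P a := hs a (mem_insert_self a s)
    have hPs : ∀ n ∈ s, P n := fun n hn => hs n (mem_insert_of_mem hn)
    have hcount : #s < count P (a + 1) := by
      rw [count_eq_card_filter_range, ← Nat.add_one_le_iff, ← card_insert_of_notMem ha]
      refine card_le_card fun n hn => mem_filter.mpr ⟨?_, hs n hn⟩
      rw [mem_range, Nat.lt_succ_iff]
      rcases mem_insert.mp hn with rfl | hn
      exacts [le_rfl, (hlt n hn).le]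
    have hnth_le : nth P #s ≤ a := Nat.lt_succ_iff.mp (nth_lt_of_lt_count hcount)
    have hnth_mem : P (nth P #s) := nth_mem _ fun hf => hcount.trans_le (count_le_card hf _)
    have ih := ih hPs
    rw [prod_insert ha, card_insert_of_notMem ha, prod_range_succ, mul_comm]
    exact mul_le_mul ih (hg hnth_mem hPa hnth_le) (hg₀ a hPa)
      ((prod_nonneg fun n hn => hg₀ n (hPs n hn)).trans ih)

abbrev OddPrime (p : ℕ) : Prop := p.Prime ∧ p ≠ 2

/-- `q / φ*(q)` for a prime power `q`; `N / φ*(N)` is the product of these over the prime powers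
exactly dividing `N`. -/
def quotPred (q : ℕ) : ℚ := q / (q - 1)

lemma quotPred_nonneg (q : ℕ) : 0 ≤ quotPred q := by
  rcases q.eq_zero_or_pos with rfl | hq
  · simp [quotPred]
  · exact div_nonneg q.cast_nonneg (sub_nonneg.mpr (by exact_mod_cast hq))

lemma quotPred_antitoneOn : AntitoneOn quotPred {q | 2 ≤ q} := by
  intro a ha b _ hab
  have ha : (2 : ℚ) ≤ a := by exact_mod_cast ha
  have hab : (a : ℚ) ≤ b := by exact_mod_cast hab
  rw [quotPred, quotPred, div_le_div_iff₀ (by linarith) (by linarith)]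
  linarith

lemma Nat.self_le_pow_factorization {n p : ℕ} (hp : p ∈ n.primeFactors) :
    p ≤ p ^ n.factorization p :=
  let ⟨hprime, hdvd, hn⟩ := mem_primeFactors.mp hp
  Nat.le_self_pow (hprime.factorization_pos_of_dvd hn hdvd).ne' p

lemma uphi_pos (n : ℕ) : 0 < uphi n :=
  prod_pos fun _ hp => Nat.sub_pos_of_lt
    ((prime_of_mem_primeFactors hp).one_lt.trans_le (self_le_pow_factorization hp))

lemma two_pow_card_erase_two_dvd_uphi (n : ℕ) : 2 ^ #(n.primeFactors.erase 2) ∣ uphi n := by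
  rw [← prod_const]
  refine (prod_dvd_prod_of_dvd _ _ fun p hp => ?_).trans
    (prod_dvd_prod_of_subset _ _ _ (erase_subset 2 _))
  obtain ⟨hp2, hp⟩ := mem_erase.mp hp
  exact (Nat.Odd.sub_odd ((prime_of_mem_primeFactors hp).odd_of_ne_two hp2).pow odd_one).two_dvd

lemma cast_div_uphi {n : ℕ} (hn : n ≠ 0) :
    (n : ℚ) / uphi n = ∏ p ∈ n.primeFactors, quotPred (p ^ n.factorization p) := by
  nth_rw 1 [prod_primeFactors_pow_factorization hn]
  rw [uphi, Nat.cast_prod, Nat.cast_prod, ← prod_div_distrib]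
  refine prod_congr rfl fun p hp => ?_
  have h1 : 1 ≤ p ^ n.factorization p :=
    (prime_of_mem_primeFactors hp).one_le.trans (self_le_pow_factorization hp)
  rw [quotPred, Nat.cast_sub h1, Nat.cast_one]

lemma cast_div_uphi_le {n : ℕ} (hn : n ≠ 0) (h2 : 2 ∈ n.primeFactors) :
    (n : ℚ) / uphi n ≤ quotPred (2 ^ n.factorization 2) *
      ∏ i ∈ range #(n.primeFactors.erase 2), quotPred (nth OddPrime i) := by
  rw [cast_div_uphi hn, ← mul_prod_erase _ _ h2]
  gcongr
  · exact quotPred_nonneg _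
  calc ∏ p ∈ n.primeFactors.erase 2, quotPred (p ^ n.factorization p)
      ≤ ∏ p ∈ n.primeFactors.erase 2, quotPred p := by
        refine prod_le_prod (fun _ _ => quotPred_nonneg _) fun p hp => ?_
        have hp2 := (prime_of_mem_primeFactors (mem_of_mem_erase hp)).two_le
        exact quotPred_antitoneOn hp2 (hp2.trans (self_le_pow_factorization (mem_of_mem_erase hp)))
          (self_le_pow_factorization (mem_of_mem_erase hp))
    _ ≤ _ := prod_le_prod_range_nth (quotPred_antitoneOn.mono fun _ hp => hp.1.two_le)
        (fun _ _ => quotPred_nonneg _) _ fun p hp =>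
          ⟨prime_of_mem_primeFactors (mem_of_mem_erase hp), ne_of_mem_erase hp⟩

lemma eq_one_of_three_le_quotPred_mul {e m : ℕ} (he : e ≠ 0) (hme : m ≤ e) (hm : m ≤ 6)
    (h : 3 ≤ quotPred (2 ^ e) * ∏ i ∈ range m, quotPred (nth OddPrime i)) : e = 1 ∧ m = 1 := by
  have nth_eq (q : ℕ) (hq : q.Prime) (hq2 : q ≠ 2) : nth OddPrime (count OddPrime q) = q :=
    nth_count ⟨hq, hq2⟩
  -- `count OddPrime q` is a closed computation, so it unifies with the index by evaluation.
  have h0 : nth OddPrime 0 = 3 := nth_eq 3 (by norm_num) (by norm_num)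
  have h1 : nth OddPrime 1 = 5 := nth_eq 5 (by norm_num) (by norm_num)
  have h2 : nth OddPrime 2 = 7 := nth_eq 7 (by norm_num) (by norm_num)
  have h3 : nth OddPrime 3 = 11 := nth_eq 11 (by norm_num) (by norm_num)
  have h4 : nth OddPrime 4 = 13 := nth_eq 13 (by norm_num) (by norm_num)
  have h5 : nth OddPrime 5 = 17 := nth_eq 17 (by norm_num) (by norm_num)
  rcases le_or_gt 5 e with he5 | he5
  · have h32 : quotPred (2 ^ e) ≤ 32 / 31 := by
      have := quotPred_antitoneOn (a := 2 ^ 5) (b := 2 ^ e) (by norm_num) (Nat.le_self_pow he 2)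
        (Nat.pow_le_pow_right (by norm_num) he5)
      norm_num [quotPred] at this ⊢
      exact this
    have := h.trans (mul_le_mul_of_nonneg_right h32 (prod_nonneg fun _ _ => quotPred_nonneg _))
    interval_cases m <;> norm_num [prod_range_succ, quotPred, h0, h1, h2, h3, h4, h5] at this
  · interval_cases e <;> interval_cases m <;>
      first | exact ⟨rfl, rfl⟩ | norm_num [prod_range_succ, quotPred, h0, h1, h2, h3, h4, h5] at h

lemma eq_six_of_card_primeFactors_erase_two_eq_one {n : ℕ} (hn : n ≠ 0) (h2 : 2 ∈ n.primeFactors)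
    (he : n.factorization 2 = 1) (hm : #(n.primeFactors.erase 2) = 1)
    (h3 : 3 ≤ (n : ℚ) / uphi n) : n = 6 := by
  obtain ⟨p, hp⟩ := card_eq_one.mp hm
  obtain ⟨hp2, hpn⟩ := mem_erase.mp (hp ▸ mem_singleton_self p)
  have hpf : n.primeFactors = {2, p} := by rw [← insert_erase h2, hp]
  have hq3 : 3 ≤ p ^ n.factorization p := by
    have := (prime_of_mem_primeFactors hpn).two_le
    have := self_le_pow_factorization hpn
    omega
  have hq : p ^ n.factorization p ≤ 3 := by
    rw [cast_div_uphi hn, hpf, prod_pair (Ne.symm hp2), he] at h3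
    have hq3' : (3 : ℚ) ≤ (p : ℚ) ^ n.factorization p := by exact_mod_cast hq3
    norm_num [quotPred] at h3
    rw [mul_div_assoc', le_div_iff₀ (by linarith)] at h3
    exact_mod_cast (by linarith : (p : ℚ) ^ n.factorization p ≤ 3)
  rw [prod_primeFactors_pow_factorization hn, hpf, prod_pair (Ne.symm hp2), he, le_antisymm hq hq3]
  norm_num

theorem stmt14_general (N : ℕ) (hdvd : uphi N ∣ N)
    (hne : N ∉ ({1, 2, 6, 12, 168, 240} : Set ℕ))
    (hh : 3 ≤ N / uphi N) :
    8 ≤ N.primeFactors.card := by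
  by_contra! hcard
  have hN : N ≠ 0 := by rintro rfl; simp at hh
  have h3 : (3 : ℚ) ≤ N / uphi N := by
    rw [← Nat.cast_div hdvd (by exact_mod_cast (uphi_pos N).ne')]
    exact_mod_cast hh
  have hme : #(N.primeFactors.erase 2) ≤ N.factorization 2 :=
    (prime_two.pow_dvd_iff_le_factorization hN).mp ((two_pow_card_erase_two_dvd_uphi N).trans hdvd)
  have h2 : 2 ∈ N.primeFactors := by
    by_contra h2
    have hodd : N.factorization 2 = 0 :=
      factorization_eq_zero_of_not_dvd fun h => h2 (prime_two.mem_primeFactors h hN)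
    rw [erase_eq_of_notMem h2, hodd, Nat.le_zero, Finset.card_eq_zero, primeFactors_eq_empty] at hme
    exact hne (by simp [hme.resolve_left hN])
  have hm6 : #(N.primeFactors.erase 2) ≤ 6 := by rw [card_erase_of_mem h2]; omega
  have he : N.factorization 2 ≠ 0 :=
    (prime_two.factorization_pos_of_dvd hN (dvd_of_mem_primeFactors h2)).ne'
  obtain ⟨he, hm⟩ :=
    eq_one_of_three_le_quotPred_mul he hme hm6 (h3.trans (cast_div_uphi_le hN h2))
  exact hne (by simp [eq_six_of_card_primeFactors_erase_two_eq_one hN h2 he hm h3])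

theorem stmt14 (N : ℕ) (hN : 0 < N) (hdvd : uphi N ∣ N)
    (hne : N ∉ ({1, 2, 6, 12, 168, 240} : Set ℕ))
    (hh : 3 ≤ N / uphi N) :
    8 ≤ N.primeFactors.card :=
  stmt14_general N hdvd hne hh
end

section
/- For all integers k ≥ 2, 2^k − 1 has a prime divisor p with p ≡ 1 (mod k). -/
open Polynomial

-- arithmetic helpers
private lemma two_pow_ge (n : ℕ) (h : 3 ≤ n) : 2 * n + 2 ≤ 2 ^ n := by
  induction n, h using Nat.le_induction with
  | base => norm_num
  | succ n hn ih => rw [pow_succ]; omega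

private lemma two_pow_ge' (n : ℕ) (h : 5 ≤ n) : 3 * n + 4 ≤ 2 ^ n := by
  induction n, h using Nat.le_induction with
  | base => norm_num
  | succ n hn ih => rw [pow_succ]; omega

-- the root of cyclotomic mod q
private lemma root_mod (k q : ℕ) (hq : q.Prime)
    (hdvd : (q:ℤ) ∣ (cyclotomic k ℤ).eval 2) :
    (cyclotomic k (ZMod q)).IsRoot 2 := by
  have := cyclotomic.eval_apply (2:ℤ) k (Int.castRingHom (ZMod q))
  simp only [Int.coe_castRingHom, Int.cast_two] at this
  rw [IsRoot.def, this]
  haveI : NeZero q := ⟨hq.ne_zero⟩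
  exact (ZMod.intCast_zmod_eq_zero_iff_dvd _ q).mpr hdvd

private lemma cyc_dvd_nat (k : ℕ) (hk : 1 ≤ k) :
    ((cyclotomic k ℤ).eval 2).natAbs ∣ 2 ^ k - 1 := by
  have h := cyclotomic.dvd_X_pow_sub_one k ℤ
  have h2 : (cyclotomic k ℤ).eval 2 ∣ (2:ℤ) ^ k - 1 := by
    have := eval_dvd (x := (2:ℤ)) h
    simpa using this
  have hcast : ((2 ^ k - 1 : ℕ) : ℤ) = (2:ℤ) ^ k - 1 := by
    push_cast [Nat.one_le_two_pow]; ring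
  have := Int.natAbs_dvd_natAbs.mpr h2
  rwa [← hcast, Int.natAbs_natCast] at this

-- L1: good prime
private lemma good (k q : ℕ) (hk : 2 ≤ k) (hq : q.Prime) (hqk : ¬ q ∣ k)
    (hdvd : (q:ℤ) ∣ (cyclotomic k ℤ).eval 2) : q ≡ 1 [MOD k] := by
  haveI := Fact.mk hq
  haveI : NeZero (k : ZMod q) := ⟨by rw [Ne, ZMod.natCast_eq_zero_iff]; exact hqk⟩
  have hroot := root_mod k q hq hdvd
  have hprim : IsPrimitiveRoot (2 : ZMod q) k := isRoot_cyclotomic_iff.mp hroot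
  have h2 : (2 : ZMod q) ≠ 0 := by
    intro h
    have h1 := hprim.pow_eq_one
    rw [h, zero_pow (by omega : k ≠ 0)] at h1
    exact zero_ne_one h1
  have hdvd1 : k ∣ q - 1 := by
    have := orderOf_dvd_of_pow_eq_one (ZMod.pow_card_sub_one_eq_one h2)
    rwa [← hprim.eq_orderOf] at this
  exact ((Nat.modEq_iff_dvd' hq.one_lt.le).mpr hdvd1).symm

-- L2: bad prime order structure
private lemma bad (k q : ℕ) (hk : 2 ≤ k) (hq : q.Prime) (hq2 : q ≠ 2) (hqk : q ∣ k)
    (hdvd : (q:ℤ) ∣ (cyclotomic k ℤ).eval 2) :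
    orderOf (2 : ZMod q) = k / q ^ k.factorization q := by
  haveI := Fact.mk hq
  set v := k.factorization q with hv
  set m := k / q ^ v with hm
  have hkvm : q ^ v * m = k := Nat.ordProj_mul_ordCompl_eq_self k q
  have hqm : ¬ q ∣ m := Nat.not_dvd_ordCompl hq (by omega)
  haveI : NeZero (m : ZMod q) := ⟨by rw [Ne, ZMod.natCast_eq_zero_iff]; exact hqm⟩
  have hroot := root_mod k q hq hdvd
  rw [← hkvm] at hroot
  have hprim : IsPrimitiveRoot (2 : ZMod q) m :=
    (isRoot_cyclotomic_prime_pow_mul_iff_of_charP).mp hroot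
  exact hprim.eq_orderOf.symm

private lemma ord_dvd (q : ℕ) (hq : q.Prime) (hq2 : q ≠ 2) :
    orderOf (2 : ZMod q) ∣ q - 1 := by
  haveI := Fact.mk hq
  have h2 : (2 : ZMod q) ≠ 0 := by
    have hnd : ¬ q ∣ 2 := fun h => hq2 ((Nat.prime_dvd_prime_iff_eq hq Nat.prime_two).mp h)
    intro h
    apply hnd
    rw [← ZMod.natCast_eq_zero_iff]
    exact_mod_cast h
  exact orderOf_dvd_of_pow_eq_one (ZMod.pow_card_sub_one_eq_one h2)

private lemma binom (t : ℤ) : ∀ n : ℕ, ∃ u : ℤ, (1+t)^n = 1 + n*t + t^2*u := by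
  intro n
  induction n with
  | zero => exact ⟨0, by simp⟩
  | succ n ih =>
    obtain ⟨u, hu⟩ := ih
    refine ⟨u + n + t*u, ?_⟩
    rw [pow_succ, hu]
    push_cast
    ring

private lemma geom_binom (t : ℤ) (n : ℕ) :
    ∃ U : ℤ, 2 * (∑ i ∈ Finset.range n, (1+t)^i) = 2*n + n*(n-1)*t + t^2*U := by
  induction n with
  | zero => exact ⟨0, by simp⟩
  | succ n ih =>
    obtain ⟨U, hU⟩ := ih
    obtain ⟨u, hu⟩ := binom t n
    refine ⟨U + 2*u, ?_⟩
    rw [Finset.sum_range_succ, mul_add, hU, hu]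
    push_cast
    ring

-- L3: multiplicity bound
private lemma multbound (k q : ℕ) (hk : 2 ≤ k) (hq : q.Prime) (hq2 : q ≠ 2) (hqk : q ∣ k)
    (hdvd : (q:ℤ) ∣ (cyclotomic k ℤ).eval 2) :
    ¬ ((q:ℤ)^2 ∣ (cyclotomic k ℤ).eval 2) := by
  haveI := Fact.mk hq
  intro hsq
  set c := (cyclotomic k ℤ).eval 2 with hc
  set m := k / q with hm
  have hq2le := hq.two_le
  have hmk : m * q = k := Nat.div_mul_cancel hqk
  have hmpos : 0 < m := by
    rcases Nat.eq_zero_or_pos m with h | h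
    · rw [h] at hmk; omega
    · exact h
  have hmlt : m < k := by
    rw [← hmk]
    exact (lt_mul_iff_one_lt_right hmpos).mpr (by omega)
  have hmem : m ∈ k.properDivisors := Nat.mem_properDivisors.mpr ⟨⟨q, hmk.symm⟩, hmlt⟩
  have hdvdS : ((2:ℤ)^m - 1) * c ∣ (2:ℤ)^k - 1 := by
    have h1 := X_pow_sub_one_mul_cyclotomic_dvd_X_pow_sub_one_of_dvd ℤ hmem
    have h2 := eval_dvd (x := (2:ℤ)) h1
    simpa using h2
  set S : ℤ := ∑ i ∈ Finset.range q, ((2:ℤ)^m)^i with hS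
  have hgeom : ((2:ℤ)^m - 1) * S = (2:ℤ)^k - 1 := by
    have h1 := geom_sum_mul ((2:ℤ)^m) q
    rw [← pow_mul, hmk] at h1
    rw [hS, mul_comm]
    exact h1
  have h2m1 : ((2:ℤ)^m - 1) ≠ 0 := by
    have h1 : (1:ℤ) < 2^m := one_lt_pow₀ (by norm_num) (by omega)
    exact sub_ne_zero.mpr h1.ne'

  have hcS : c ∣ S := by
    rw [← hgeom] at hdvdS
    exact (mul_dvd_mul_iff_left h2m1).mp hdvdS
  have hck : c ∣ (2:ℤ)^k - 1 := (dvd_mul_left c _).trans hdvdS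
  have hq2m : (q:ℤ) ∣ (2:ℤ)^m - 1 := by
    have hq2k : (q:ℤ) ∣ (2:ℤ)^k - 1 := hdvd.trans hck
    rw [← ZMod.intCast_zmod_eq_zero_iff_dvd]
    have hk1 : (2 : ZMod q)^k = 1 := by
      have h1 := (ZMod.intCast_zmod_eq_zero_iff_dvd _ q).mpr hq2k
      push_cast at h1
      linear_combination h1
    have h2 := ZMod.pow_card ((2 : ZMod q)^m)
    rw [← pow_mul, hmk, hk1] at h2
    push_cast
    linear_combination -h2
  have hqS : (q:ℤ)^2 ∣ S := hsq.trans hcS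
  set t : ℤ := (2:ℤ)^m - 1 with htdef
  obtain ⟨T, hT⟩ := hq2m
  obtain ⟨U, hU⟩ := geom_binom t q
  have hSU : 2*S = 2*q + q*(q-1)*t + t^2*U := by
    rw [hS]
    rw [show ((2:ℤ)^m) = 1 + t by rw [htdef]; ring]
    exact hU
  have hq2q : (q:ℤ)^2 ∣ 2*(q:ℤ) := by
    have h1 : (q:ℤ)^2 ∣ 2*S := hqS.mul_left 2
    have h2 : (q:ℤ)^2 ∣ (q:ℤ)*((q:ℤ)-1)*t := ⟨((q:ℤ)-1)*T, by rw [hT]; ring⟩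
    have h3 : (q:ℤ)^2 ∣ t^2*U := ⟨T^2*U, by rw [hT]; ring⟩
    have h4 := (h1.sub h2).sub h3
    have : 2*S - (q:ℤ)*((q:ℤ)-1)*t - t^2*U = 2*(q:ℤ) := by rw [hSU]; ring
    rwa [this] at h4
  have hq0 : (q:ℤ) ≠ 0 := by exact_mod_cast hq.ne_zero
  have hqdvd2 : (q:ℤ) ∣ 2 := by
    rw [pow_two, show 2*(q:ℤ) = (q:ℤ)*2 by ring] at hq2q
    exact (mul_dvd_mul_iff_left hq0).mp hq2q
  have hle := Int.le_of_dvd (by norm_num) hqdvd2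
  have : q ≤ 2 := by exact_mod_cast hle
  interval_cases q
  · exact hq2 rfl

private lemma cyc_reduce (q m : ℕ) (hq : q.Prime) : ∀ v, 1 ≤ v → ∀ x : ℤ,
    (cyclotomic (q ^ v * m) ℤ).eval x = (cyclotomic (q * m) ℤ).eval (x ^ q ^ (v - 1)) := by
  intro v hv
  induction v, hv using Nat.le_induction with
  | base => intro x; simp
  | succ v hv ih =>
    intro x
    have hdvd : q ∣ q ^ v * m := dvd_mul_of_dvd_left (dvd_pow_self q (by omega)) m
    have h1 : (q ^ v * m) * q = q ^ (v+1) * m := by ring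
    rw [← h1, ← cyclotomic_expand_eq_cyclotomic hq hdvd ℤ, expand_eval, ih (x ^ q), ← pow_mul]
    congr 2
    rw [Nat.add_sub_cancel, ← pow_succ']
    congr 1
    omega

private lemma keyineq (q v : ℕ) (hq : q.Prime) (hq2 : q ≠ 2) (hv : 1 ≤ v) (hne : q = 3 → 2 ≤ v) :
    q * 2 ^ q ^ (v-1) + q + 2 ≤ (2 ^ q ^ (v-1)) ^ q := by
  have hq3 : 3 ≤ q := by have := hq.two_le; omega
  set Q := 2 ^ q ^ (v - 1) with hQ
  rcases Nat.lt_or_ge v 2 with hv1 | hv2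
  · have hv1' : v = 1 := by omega
    have hq5 : 5 ≤ q := by
      by_contra h
      interval_cases q
      · exact absurd (hne rfl) (by omega)
      · exact absurd hq (by decide)
    have hQ2 : Q = 2 := by rw [hQ, hv1']; norm_num
    rw [hQ2]
    have := two_pow_ge' q hq5
    omega
  · have hqe : q ≤ q ^ (v-1) := Nat.le_self_pow (by omega) q
    have h1 : 2 ^ q ≤ Q := Nat.pow_le_pow_right (by norm_num) hqe
    have h2 : 2*q + 2 ≤ Q := le_trans (two_pow_ge q hq3) h1
    have h3 : Q^3 ≤ Q^q := Nat.pow_le_pow_right (by omega) hq3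
    have h4 : q*Q + q + 2 ≤ Q^3 := by nlinarith [h2, sq_nonneg Q]
    omega

-- L4: size bound
private lemma sizebound (q v m : ℕ) (hq : q.Prime) (hq2 : q ≠ 2) (hm : 2 ≤ m) (hqm : ¬ q ∣ m)
    (hv : 1 ≤ v) (hne : q = 3 → 2 ≤ v) :
    (q : ℤ) < (cyclotomic (q ^ v * m) ℤ).eval 2 := by
  have hq3 : 3 ≤ q := by have := hq.two_le; omega
  rw [cyc_reduce q m hq v hv 2]
  set e : ℕ := q ^ (v - 1) with he
  -- move to ℝ
  have hcast : (((cyclotomic (q*m) ℤ).eval ((2:ℤ)^e) : ℤ) : ℝ)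
      = (cyclotomic (q*m) ℝ).eval ((2:ℝ)^e) := by
    have h := cyclotomic.eval_apply ((2:ℤ)^e) (q*m) (algebraMap ℤ ℝ)
    simp only [algebraMap_int_eq, eq_intCast] at h
    rw [← h]
    push_cast
    norm_num
  rw [show ((q:ℤ) < (cyclotomic (q*m) ℤ).eval ((2:ℤ)^e)) ↔
      ((q:ℝ) < (((cyclotomic (q*m) ℤ).eval ((2:ℤ)^e) : ℤ) : ℝ)) by exact_mod_cast Iff.rfl]
  rw [hcast]
  set r : ℝ := (2:ℝ)^e with hr
  have he0 : e ≠ 0 := by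
    have : 0 < q ^ (v-1) := pow_pos (by omega) _
    omega
  have hr1 : 1 < r := by
    rw [hr]
    exact one_lt_pow₀ (by norm_num) he0
  -- key numeric inequality
  have hkey := keyineq q v hq hq2 hv hne
  have hkeyR : (q:ℝ)*r + (q:ℝ) + 2 ≤ r^q := by
    have : ((q * 2 ^ e + q + 2 : ℕ) : ℝ) ≤ (((2 ^ e) ^ q : ℕ) : ℝ) := by exact_mod_cast hkey
    push_cast at this
    rw [hr]
    linarith
  have hgt : (q:ℝ)*(r+1) < r^q - 1 := by nlinarith
  have hle : r + 1 ≤ r^q - 1 := by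
    have hq1 : (1:ℝ) ≤ q := by exact_mod_cast hq.one_lt.le
    nlinarith
  -- cyclotomic bounds
  set φ := m.totient with hφ
  have hφ1 : 1 ≤ φ := Nat.totient_pos.mpr (by omega)
  obtain ⟨ψ, hψ⟩ : ∃ ψ, φ = ψ + 1 := ⟨φ - 1, by omega⟩
  have hrq1 : 1 < r^q := one_lt_pow₀ hr1 (by omega)
  have hA : (r^q - 1)^φ ≤ (cyclotomic m ℝ).eval (r^q) :=
    sub_one_pow_totient_le_cyclotomic_eval hrq1 m
  have hB : (cyclotomic m ℝ).eval r ≤ (r+1)^φ :=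
    cyclotomic_eval_le_add_one_pow_totient hr1 m
  have hBpos : 0 < (cyclotomic m ℝ).eval r := cyclotomic_pos' m hr1
  have hprod : (cyclotomic (q*m) ℝ).eval r * (cyclotomic m ℝ).eval r
      = (cyclotomic m ℝ).eval (r^q) := by
    have h := cyclotomic_expand_eq_cyclotomic_mul hq hqm ℝ
    have h2 := congrArg (eval r) h
    rw [expand_eval, eval_mul] at h2
    rw [mul_comm m q] at h2
    exact h2.symm
  by_contra hcon
  push_neg at hcon
  -- chain of inequalities
  have c1 : (cyclotomic m ℝ).eval (r^q) ≤ (q:ℝ) * (cyclotomic m ℝ).eval r := by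
    rw [← hprod]
    exact mul_le_mul_of_nonneg_right hcon hBpos.le
  have c2 : (q:ℝ) * (cyclotomic m ℝ).eval r ≤ (q:ℝ) * (r+1)^φ :=
    mul_le_mul_of_nonneg_left hB (by positivity)
  have c3 : (q:ℝ) * (r+1)^φ < (r^q - 1)^φ := by
    rw [hψ, pow_succ, pow_succ]
    have d1 : (r+1)^ψ ≤ (r^q - 1)^ψ := pow_le_pow_left₀ (by linarith) hle ψ
    have d2 : (0:ℝ) < (r^q-1)^ψ := pow_pos (by linarith) ψ
    calc (q:ℝ) * ((r+1)^ψ * (r+1)) ≤ (r^q-1)^ψ * ((q:ℝ) * (r+1)) := by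
          rw [show (q:ℝ) * ((r+1)^ψ * (r+1)) = (r+1)^ψ * ((q:ℝ)*(r+1)) by ring]
          apply mul_le_mul_of_nonneg_right d1
          positivity
    _ < (r^q-1)^ψ * (r^q - 1) := by
          exact mul_lt_mul_of_pos_left hgt d2
  linarith

theorem stmt17 (k : ℕ) (hk : 2 ≤ k) :
    ∃ p : ℕ, p.Prime ∧ p ∣ 2 ^ k - 1 ∧ p ≡ 1 [MOD k] := by
  rcases eq_or_ne k 6 with rfl | hk6
  · exact ⟨7, by norm_num, by norm_num, by decide⟩
  set c : ℤ := (cyclotomic k ℤ).eval 2 with hc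
  have hcpos : 0 < c := cyclotomic_pos' k (by norm_num : (1:ℤ) < 2)
  have hN1 : 1 < c.natAbs := by
    have := sub_one_lt_natAbs_cyclotomic_eval (n := k) (q := 2) (by omega) (by norm_num)
    norm_num at this
    omega
  set N := c.natAbs with hNdef
  have hNdvd : N ∣ 2 ^ k - 1 := cyc_dvd_nat k (by omega)
  have hNodd : ¬ 2 ∣ N := by
    intro h2N
    have h2k : (2:ℕ) ∣ 2 ^ k := dvd_pow_self 2 (by omega)
    have h2k' : 2 ≤ 2 ^ k := Nat.one_lt_two_pow_iff.mpr (by omega)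
    have := h2N.trans hNdvd
    omega
  have hdvd_iff : ∀ p : ℕ, ((p:ℤ) ∣ c ↔ p ∣ N) := by
    intro p
    rw [hNdef, ← Int.natAbs_dvd_natAbs, Int.natAbs_natCast]
  by_cases hgood : ∃ p, p.Prime ∧ p ∣ N ∧ ¬ p ∣ k
  · obtain ⟨p, hp, hpN, hpk⟩ := hgood
    exact ⟨p, hp, hpN.trans hNdvd, good k p hk hp hpk ((hdvd_iff p).mpr hpN)⟩
  exfalso
  push_neg at hgood
  set q := N.minFac with hqdef
  have hqprime : q.Prime := Nat.minFac_prime (by omega)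
  have hqN : q ∣ N := Nat.minFac_dvd N
  have hqc : (q:ℤ) ∣ c := (hdvd_iff q).mpr hqN
  have hq2 : q ≠ 2 := fun h => hNodd (h ▸ hqN)
  have hqk : q ∣ k := hgood q hqprime hqN
  set v := k.factorization q with hvdef
  set m := k / q ^ v with hmdef
  have hkvm : q ^ v * m = k := Nat.ordProj_mul_ordCompl_eq_self k q
  have hv1 : 1 ≤ v := (Nat.Prime.factorization_pos_of_dvd hqprime (by omega) hqk)
  have hqm : ¬ q ∣ m := Nat.not_dvd_ordCompl hqprime (by omega)
  have hord : orderOf (2 : ZMod q) = m := bad k q hk hqprime hq2 hqk hqc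
  have hmdvd : m ∣ q - 1 := hord ▸ ord_dvd q hqprime hq2
  have hm2 : 2 ≤ m := by
    rcases Nat.lt_or_ge m 2 with h | h
    · interval_cases m
      · omega
      · exfalso
        have : (2 : ZMod q) = 1 := orderOf_eq_one_iff.mp (hord.trans rfl)
        have : ((1:ℕ) : ZMod q) = 0 := by
          have h21 : (2 : ZMod q) - 1 = 0 := by rw [this]; ring
          push_cast
          linear_combination h21
        rw [ZMod.natCast_eq_zero_iff] at this
        have := Nat.le_of_dvd one_pos this
        have := hqprime.two_le
        omega
    · exact h
  -- uniqueness of prime divisors of N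
  have huniq : ∀ r, r.Prime → r ∣ N → r = q := by
    intro r hr hrN
    by_contra hrq
    have hrk : r ∣ k := hgood r hr hrN
    have hrc : (r:ℤ) ∣ c := (hdvd_iff r).mpr hrN
    have hr2 : r ≠ 2 := fun h => hNodd (h ▸ hrN)
    -- r divides m
    have hrm : r ∣ m := by
      have : ¬ r ∣ q ^ v := fun h =>
        hrq ((Nat.prime_dvd_prime_iff_eq hr hqprime).mp (hr.dvd_of_dvd_pow h))
      have : Nat.Coprime r (q ^ v) := (Nat.coprime_primes hr hqprime).mpr hrq |>.pow_right v
      exact this.dvd_of_dvd_mul_left (hkvm ▸ hrk)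
    have hrq1 : r ∣ q - 1 := hrm.trans hmdvd
    -- symmetric
    set vr := k.factorization r with hvrdef
    set mr := k / r ^ vr with hmrdef
    have hordr : orderOf (2 : ZMod r) = mr := bad k r hk hr hr2 hrk hrc
    have hmrdvd : mr ∣ r - 1 := hordr ▸ ord_dvd r hr hr2
    have hqmr : q ∣ mr := by
      have : Nat.Coprime q (r ^ vr) := (Nat.coprime_primes hqprime hr).mpr (Ne.symm hrq) |>.pow_right vr
      exact this.dvd_of_dvd_mul_left ((Nat.ordProj_mul_ordCompl_eq_self k r) ▸ hqk)
    have hqr1 : q ∣ r - 1 := hqmr.trans hmrdvd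
    have h1 : r ≤ q - 1 := Nat.le_of_dvd (by have := hqprime.two_le; omega) hrq1
    have h2 : q ≤ r - 1 := Nat.le_of_dvd (by have := hr.two_le; omega) hqr1
    omega
  -- N is a power of q
  obtain ⟨a, hNa⟩ : ∃ a, N = q ^ a :=
    ⟨_, Nat.eq_prime_pow_of_unique_prime_dvd (by omega) (fun {r} hr hrN => huniq r hr hrN)⟩
  have ha1 : a = 1 := by
    have hq2N : ¬ q ^ 2 ∣ N := by
      intro h
      have : (q:ℤ)^2 ∣ c := by
        have := (hdvd_iff (q^2)).mpr h
        push_cast at this ⊢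
        exact_mod_cast this
      exact multbound k q hk hqprime hq2 hqk hqc this
    rcases Nat.lt_or_ge a 2 with h | h
    · interval_cases a
      · simp at hNa; omega
      · rfl
    · exact absurd (hNa ▸ pow_dvd_pow q h) hq2N
  have hNq : N = q := by rw [hNa, ha1, pow_one]
  have hsize : (q:ℤ) < c := by
    have h3 : q = 3 → 2 ≤ v := by
      intro h3
      by_contra hv2
      have hv1' : v = 1 := by omega
      have hm2' : orderOf (2 : ZMod 3) = 2 := by
        haveI : Fact (Nat.Prime 2) := ⟨Nat.prime_two⟩
        exact orderOf_eq_prime (by decide) (by decide)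
      have : m = 2 := by rw [← hord, h3, hm2']
      apply hk6
      rw [← hkvm, hv1', h3, this]
      norm_num
    have := sizebound q v m hqprime hq2 hm2 hqm hv1 h3
    rwa [hkvm] at this
  have : (q:ℤ) < q := by
    calc (q:ℤ) < c := hsize
    _ = N := by rw [hNdef, Int.natAbs_of_nonneg hcpos.le]; 
    _ = q := by rw [hNq]
  omega
end

section
/- Suppose φ*(N) divides N, p_1 < p_2 < ⋯ < p_r are the odd prime factors of N with p_i^{e_i} || N, and for 0 ≤ k < r set M_k = 2^e p_1^{e_1} ⋯ p_k^{e_k} (where 2^e || N). Then gcd(M_k, φ*(M_k))·(p_{k+1} − 1) divides M_k. -/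
private lemma prod_dvd_of_nat_coprime {ι : Type*} {s : Finset ι} {f : ι → ℕ} {n : ℕ}
    (hcop : ∀ i ∈ s, ∀ j ∈ s, i ≠ j → Nat.Coprime (f i) (f j))
    (hdvd : ∀ i ∈ s, f i ∣ n) : (∏ i ∈ s, f i) ∣ n := by
  classical
  induction s using Finset.induction_on with
  | empty => simp
  | @insert a s hx ih =>
    rw [Finset.prod_insert hx]
    refine Nat.Coprime.mul_dvd_of_dvd_of_dvd ?_ (hdvd a (Finset.mem_insert_self a s)) ?_
    · exact Nat.Coprime.prod_right fun j hj =>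
        hcop a (Finset.mem_insert_self a s) j (Finset.mem_insert_of_mem hj)
          (fun h => hx (h ▸ hj))
    · exact ih (fun i hi j hj hij => hcop i (Finset.mem_insert_of_mem hi) j
        (Finset.mem_insert_of_mem hj) hij) (fun i hi => hdvd i (Finset.mem_insert_of_mem hi))

private lemma fact_eq {q a n : ℕ} (hq : q.Prime) (hn : n ≠ 0) (h1 : q ^ a ∣ n)
    (h2 : ¬ q ^ (a + 1) ∣ n) : n.factorization q = a := by
  have hle : a ≤ n.factorization q := (Nat.Prime.pow_dvd_iff_le_factorization hq hn).mp h1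
  have hlt : ¬ (a + 1 ≤ n.factorization q) := fun h =>
    h2 ((Nat.Prime.pow_dvd_iff_le_factorization hq hn).mpr h)
  omega

theorem stmt19 (N e r k : ℕ) (p ee : ℕ → ℕ) (hN : 0 < N) (hdvd : uphi N ∣ N)
    (h2e : 2 ^ e ∣ N) (h2e' : ¬ 2 ^ (e + 1) ∣ N)
    (hmono : ∀ i j : ℕ, i < j → j < r → p i < p j)
    (hodd : ∀ i < r, (p i).Prime ∧ p i ≠ 2)
    (hall : ∀ q : ℕ, q.Prime → q ≠ 2 → (q ∣ N ↔ ∃ i < r, p i = q))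
    (hee : ∀ i < r, 1 ≤ ee i ∧ p i ^ ee i ∣ N ∧ ¬ p i ^ (ee i + 1) ∣ N)
    (hk : k < r) :
    Nat.gcd (2 ^ e * ∏ i ∈ Finset.range k, p i ^ ee i)
        (uphi (2 ^ e * ∏ i ∈ Finset.range k, p i ^ ee i)) * (p k - 1) ∣
      2 ^ e * ∏ i ∈ Finset.range k, p i ^ ee i := by
  set M := 2 ^ e * ∏ i ∈ Finset.range k, p i ^ ee i with hMdef
  have hNne : N ≠ 0 := hN.ne'
  have hpkprime : (p k).Prime := (hodd k hk).1
  have hpkne2 : p k ≠ 2 := (hodd k hk).2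
  have hpk3 : 2 < p k := lt_of_le_of_ne hpkprime.two_le (Ne.symm hpkne2)
  -- M divides N
  have hMdvdN : M ∣ N := by
    have hprod : (∏ i ∈ Finset.range k, p i ^ ee i) ∣ N := by
      apply prod_dvd_of_nat_coprime
      · intro i hi j hj hij
        have hi' := lt_trans (Finset.mem_range.mp hi) hk
        have hj' := lt_trans (Finset.mem_range.mp hj) hk
        have hne : p i ≠ p j := by
          rcases Nat.lt_or_ge i j with h | h
          · exact (hmono i j h hj').ne
          · exact (hmono j i (lt_of_le_of_ne h (Ne.symm hij)) hi').ne'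
        exact Nat.Coprime.pow _ _
          ((Nat.coprime_primes (hodd i hi').1 (hodd j hj').1).mpr hne)
      · intro i hi
        exact (hee i (lt_trans (Finset.mem_range.mp hi) hk)).2.1
    refine Nat.Coprime.mul_dvd_of_dvd_of_dvd ?_ h2e hprod
    apply Nat.Coprime.pow_left
    apply Nat.Coprime.prod_right
    intro i hi
    have hi' := lt_trans (Finset.mem_range.mp hi) hk
    exact Nat.Coprime.pow_right _
      ((Nat.coprime_primes Nat.prime_two (hodd i hi').1).mpr (Ne.symm (hodd i hi').2))
  have hMpos : 0 < M := Nat.pos_of_dvd_of_pos hMdvdN hN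
  have hM0 : M ≠ 0 := hMpos.ne'
  -- primes dividing M
  have hMprime : ∀ q : ℕ, q.Prime → q ∣ M → q = 2 ∨ ∃ i < k, p i = q := by
    intro q hq hqm
    rcases (Nat.Prime.dvd_mul hq).mp hqm with h | h
    · exact Or.inl ((Nat.prime_dvd_prime_iff_eq hq Nat.prime_two).mp (hq.dvd_of_dvd_pow h))
    · obtain ⟨i, hi, hd⟩ := (hq.prime.dvd_finset_prod_iff _).mp h
      refine Or.inr ⟨i, Finset.mem_range.mp hi, ?_⟩
      exact ((Nat.prime_dvd_prime_iff_eq hq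
        (hodd i (lt_trans (Finset.mem_range.mp hi) hk)).1).mp (hq.dvd_of_dvd_pow hd)).symm
  -- factorizations
  have hv2N : N.factorization 2 = e := fact_eq Nat.prime_two hNne h2e h2e'
  have hv2M : M.factorization 2 = e :=
    fact_eq Nat.prime_two hM0 (dvd_mul_right _ _) (fun h => h2e' (h.trans hMdvdN))
  have hviN : ∀ i < r, N.factorization (p i) = ee i := fun i hi =>
    fact_eq (hodd i hi).1 hNne (hee i hi).2.1 (hee i hi).2.2
  have hviM : ∀ i < k, M.factorization (p i) = ee i := by
    intro i hi
    have hik := lt_trans hi hk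
    refine fact_eq (hodd i hik).1 hM0 ?_ (fun h => (hee i hik).2.2 (h.trans hMdvdN))
    exact Dvd.dvd.mul_left (Finset.dvd_prod_of_mem _ (Finset.mem_range.mpr hi)) _
  have hfactMN : ∀ q ∈ M.primeFactors, M.factorization q = N.factorization q := by
    intro q hq
    obtain ⟨hqp, hqM, -⟩ := Nat.mem_primeFactors.mp hq
    rcases hMprime q hqp hqM with rfl | ⟨i, hi, rfl⟩
    · rw [hv2M, hv2N]
    · rw [hviM i hi, hviN i (lt_trans hi hk)]
  have hpknotM : (p k) ∉ M.primeFactors := by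
    intro h
    obtain ⟨hqp, hqM, -⟩ := Nat.mem_primeFactors.mp h
    rcases hMprime _ hqp hqM with h2 | ⟨i, hi, hip⟩
    · exact hpkne2 h2
    · exact absurd hip (ne_of_lt (hmono i k hi hk))
  have hsub : insert (p k) M.primeFactors ⊆ N.primeFactors := by
    intro q hq
    rcases Finset.mem_insert.mp hq with rfl | hq
    · refine Nat.mem_primeFactors.mpr ⟨hpkprime, ?_, hNne⟩
      exact dvd_trans (dvd_pow_self (p k) (by have := (hee k hk).1; omega)) (hee k hk).2.1
    · obtain ⟨hqp, hqM, -⟩ := Nat.mem_primeFactors.mp hq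
      exact Nat.mem_primeFactors.mpr ⟨hqp, hqM.trans hMdvdN, hNne⟩
  -- key divisibility through uphi N
  have hkey : uphi M * (p k ^ ee k - 1) ∣ uphi N := by
    have h1 : uphi M * (p k ^ ee k - 1)
        = ∏ q ∈ insert (p k) M.primeFactors, (q ^ N.factorization q - 1) := by
      rw [Finset.prod_insert hpknotM, hviN k hk, mul_comm]
      congr 1
      exact Finset.prod_congr rfl fun q hq => by rw [hfactMN q hq]
    rw [h1]
    exact Finset.prod_dvd_prod_of_subset _ _ _ hsub
  set d := Nat.gcd M (uphi M) * (p k - 1) with hddef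
  have hdN : d ∣ N := by
    refine dvd_trans (mul_dvd_mul (Nat.gcd_dvd_right _ _) ?_) (hkey.trans hdvd)
    simpa using Nat.sub_dvd_pow_sub_pow (p k) 1 (ee k)
  have hd0 : d ≠ 0 := by
    have hg : 0 < Nat.gcd M (uphi M) := Nat.gcd_pos_of_pos_left _ hMpos
    have : 0 < p k - 1 := by omega
    positivity
  -- conclude d ∣ M via factorizations
  apply (Nat.factorization_prime_le_iff_dvd hd0 hM0).mp
  intro q hq
  by_cases hqd : q ∣ d
  · have hled : d.factorization q ≤ N.factorization q :=
      Finsupp.le_def.mp ((Nat.factorization_le_iff_dvd hd0 hNne).mpr hdN) q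
    have hqN : q ∣ N := hqd.trans hdN
    have heqMN : N.factorization q = M.factorization q := by
      have hqlt : q < p k := by
        rcases (Nat.Prime.dvd_mul hq).mp hqd with h | h
        · rcases hMprime q hq (h.trans (Nat.gcd_dvd_left _ _)) with rfl | ⟨i, hi, rfl⟩
          · exact hpk3
          · exact hmono i k hi hk
        · have := Nat.le_of_dvd (by omega) h
          omega
      by_cases hq2 : q = 2
      · subst hq2; rw [hv2N, hv2M]
      · obtain ⟨i, hi, rfl⟩ := (hall q hq hq2).mp hqN
        have hik : i < k := by
          by_contra hcon
          push_neg at hcon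
          rcases eq_or_lt_of_le hcon with rfl | hlt
          · exact absurd hqlt (lt_irrefl _)
          · exact absurd hqlt (not_lt.mpr (le_of_lt (hmono k i hlt hi)))
        rw [hviN i hi, hviM i hik]
    omega
  · simp [Nat.factorization_eq_zero_of_not_dvd hqd]
end
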